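/- arXiv:1507.08158 — 9 statements merged into one kernel-verified Lean document; each statement's English description precedes it below -/
import Mathlib

section
/- If a and b are non-negative integers, then the binomial coefficient C(a+b, a) is at most 2^(2*sqrt(a*b)). -/
/-!
By Pascal's rule it suffices that
`2 ^ (2√(a(b+1))) + 2 ^ (2√((a+1)b)) ≤ 2 ^ (2√((a+1)(b+1)))`. Relative to the right-hand side the
two exponents drop by `u` and `v` with `uv ≥ 1` (since `s² - p² ≤ 2s(s - p)`), so it is enough that
`2 ^ (-u) + 2 ^ (-v) ≤ 1` whenever `uv ≥ 1`. With `x = 2 ^ (-u)` this becomes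
`log x * log (1 - x) ≤ (log 2)²`, and the left-hand side increases on `(0, 1/2]` because
`x log x ≤ (1 - x) log (1 - x)` there, by concavity of `log`.
-/

open Real Set

lemma mul_log_le_one_sub_mul_log_one_sub {x : ℝ} (hx0 : 0 < x) (hx : x ≤ 1 / 2) :
    x * log x ≤ (1 - x) * log (1 - x) := by
  rcases hx.lt_or_eq with hx | rfl
  · have h := strictConcaveOn_log_Ioi.concaveOn.neg.secant_mono_aux1
      (x := x) (y := 1 - x) (z := 1) hx0 (mem_Ioi.2 one_pos) (by linarith) (by linarith)
    simp only [Pi.neg_apply, log_one, neg_zero, mul_zero, add_zero] at h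
    nlinarith
  · norm_num

lemma hasDerivAt_log_mul_log_one_sub {x : ℝ} (hx0 : 0 < x) (hx1 : x < 1) :
    HasDerivAt (fun x => log x * log (1 - x)) (log (1 - x) / x - log x / (1 - x)) x := by
  refine ((hasDerivAt_log hx0.ne').fun_mul
    (((hasDerivAt_id' x).const_sub 1).log (sub_pos.2 hx1).ne')).congr_deriv ?_
  ring

lemma monotoneOn_log_mul_log_one_sub :
    MonotoneOn (fun x => log x * log (1 - x)) (Ioc 0 (1 / 2)) := by
  have hderiv : ∀ x ∈ Ioc (0 : ℝ) (1 / 2), HasDerivAt (fun x => log x * log (1 - x))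
      (log (1 - x) / x - log x / (1 - x)) x := fun x hx =>
    hasDerivAt_log_mul_log_one_sub hx.1 (by linarith [hx.2])
  refine monotoneOn_of_hasDerivWithinAt_nonneg (convex_Ioc 0 (1 / 2))
    (fun x hx => (hderiv x hx).continuousAt.continuousWithinAt)
    (fun x hx => (hderiv x (interior_subset hx)).hasDerivWithinAt) fun x hx => ?_
  rw [interior_Ioc] at hx
  have hx1 : 0 < 1 - x := by linarith [hx.2]
  rw [sub_nonneg, div_le_div_iff₀ hx1 hx.1]
  nlinarith [mul_log_le_one_sub_mul_log_one_sub hx.1 hx.2.le]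

lemma log_mul_log_one_sub_le {x : ℝ} (hx0 : 0 < x) (hx1 : x < 1) :
    log x * log (1 - x) ≤ log 2 ^ 2 := by
  wlog hx : x ≤ 1 / 2 generalizing x
  · simpa [mul_comm] using this (x := 1 - x) (by linarith) (by linarith) (by linarith)
  have := monotoneOn_log_mul_log_one_sub ⟨hx0, hx⟩ ⟨by norm_num, le_rfl⟩ hx
  dsimp only at this
  rwa [show (1 : ℝ) - 1 / 2 = 1 / 2 by norm_num, one_div, log_inv, neg_mul_neg, ← sq] at this

lemma two_rpow_neg_add_two_rpow_neg_le_one {u v : ℝ} (hu : 0 < u) (huv : 1 ≤ u * v) :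
    (2 : ℝ) ^ (-u) + 2 ^ (-v) ≤ 1 := by
  set x : ℝ := 2 ^ (-u) with hx
  have hx1 : x < 1 := rpow_lt_one_of_one_lt_of_neg one_lt_two (by linarith)
  have hlog2 : 0 < log 2 := log_pos one_lt_two
  have hlog_mul := log_mul_log_one_sub_le (by positivity) hx1
  rw [hx, log_rpow two_pos] at hlog_mul
  have hlog_lower : -log 2 ≤ u * log (1 - x) :=
    le_of_mul_le_mul_left (by linarith) hlog2
  have hfactor : 0 ≤ u * (log (1 - x) + v * log 2) := by
    nlinarith [mul_le_mul_of_nonneg_right huv hlog2.le]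
  have hlog_le : log ((2 : ℝ) ^ (-v)) ≤ log (1 - x) := by
    rw [log_rpow two_pos]
    linarith [(mul_nonneg_iff_of_pos_left hu).1 hfactor]
  linarith [(log_le_log_iff (by positivity) (by linarith)).1 hlog_le]

lemma sub_le_two_mul_sqrt_mul_sub_sqrt {X Y : ℝ} (hY : 0 ≤ Y) (hYX : Y ≤ X) :
    X - Y ≤ 2 * √X * (√X - √Y) := by
  have hs := sq_sqrt (hY.trans hYX)
  have hp := sq_sqrt hY
  have := sqrt_le_sqrt hYX
  nlinarith [sqrt_nonneg Y]

lemma two_rpow_two_sqrt_add_le {A B : ℝ} (hA : 0 ≤ A) (hB : 0 ≤ B) :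
    (2 : ℝ) ^ (2 * √(A * (B + 1))) + 2 ^ (2 * √((A + 1) * B)) ≤
      2 ^ (2 * √((A + 1) * (B + 1))) := by
  set s := √((A + 1) * (B + 1))
  set u := 2 * (s - √(A * (B + 1))) with hu
  set v := 2 * (s - √((A + 1) * B)) with hv
  have hs : 0 < s := sqrt_pos.2 (by positivity)
  have hs2 : s ^ 2 = (A + 1) * (B + 1) := sq_sqrt (by positivity)
  have hus : B + 1 ≤ u * s := by
    have := sub_le_two_mul_sqrt_mul_sub_sqrt (X := (A + 1) * (B + 1)) (Y := A * (B + 1))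
      (by positivity) (by nlinarith)
    nlinarith
  have hvs : A + 1 ≤ v * s := by
    have := sub_le_two_mul_sqrt_mul_sub_sqrt (X := (A + 1) * (B + 1)) (Y := (A + 1) * B)
      (by positivity) (by nlinarith)
    nlinarith
  have huv : 1 ≤ u * v := by
    have := mul_le_mul hus hvs (by linarith) (by linarith)
    exact le_of_mul_le_mul_left (a := s ^ 2) (by nlinarith) (by positivity)
  have hsplit : ∀ w : ℝ, (2 : ℝ) ^ (2 * s - w) = 2 ^ (2 * s) * 2 ^ (-w) := fun w => by
    rw [← rpow_add two_pos, sub_eq_add_neg]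
  calc (2 : ℝ) ^ (2 * √(A * (B + 1))) + 2 ^ (2 * √((A + 1) * B))
      = 2 ^ (2 * s - u) + 2 ^ (2 * s - v) := by rw [hu, hv]; ring_nf
    _ = 2 ^ (2 * s) * (2 ^ (-u) + 2 ^ (-v)) := by rw [hsplit, hsplit, mul_add]
    _ ≤ 2 ^ (2 * s) := mul_le_of_le_one_right (by positivity)
        (two_rpow_neg_add_two_rpow_neg_le_one (pos_of_mul_pos_left (by linarith) hs.le) huv)

/-- If `a` and `b` are non-negative integers, then `C(a+b, a) ≤ 2^(2√(ab))`. -/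
theorem binom_le_two_pow_sqrt (a b : ℕ) :
    (((a + b).choose a : ℝ)) ≤ (2 : ℝ) ^ (2 * Real.sqrt ((a : ℝ) * b)) := by
  induction a generalizing b with
  | zero => simp
  | succ a iha =>
    induction b with
    | zero => simp
    | succ b ihb =>
      have hpascal : (a + 1 + (b + 1)).choose (a + 1) =
          (a + (b + 1)).choose a + (a + 1 + b).choose (a + 1) := by
        rw [show a + (b + 1) = a + 1 + b by omega, ← Nat.choose_succ_succ']
        rfl
      have iha' := iha (b + 1)
      push_cast at iha' ihb ⊢
      rw [hpascal, Nat.cast_add]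
      exact (add_le_add iha' ihb).trans (two_rpow_two_sqrt_add_le a.cast_nonneg b.cast_nonneg)
end

section
/- Let G be a graph and F a set of edges (pairs of vertices) of size at most k such that the symmetric-difference graph H = G △ F is a disjoint union of exactly p stars. Then at most p + 2k vertices of G have degree at least 2. -/
open SimpleGraph

/-- The graph obtained from `G` by toggling (adding/deleting) the edges in `F`. -/
def editedGraph {V : Type*} (G : SimpleGraph V) (F : Set (Sym2 V)) : SimpleGraph V :=
  SimpleGraph.fromEdgeSet (symmDiff G.edgeSet F)

/-- A graph is a starforest: every connected component is a star, i.e. has a center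
adjacent to all other vertices of the component, the non-center vertices being
pairwise non-adjacent. -/
def IsStarGraph {V : Type*} (H : SimpleGraph V) : Prop :=
  ∀ c : H.ConnectedComponent, ∃ ctr ∈ c.supp,
    (∀ v ∈ c.supp, v ≠ ctr → H.Adj ctr v) ∧
    (∀ u ∈ c.supp, ∀ v ∈ c.supp, u ≠ ctr → v ≠ ctr → ¬ H.Adj u v)

/-- A graph is a disjoint union of complete `t`-partite graphs: there is a colouring
with at most `t` colours such that two distinct vertices in the same connected
component are adjacent iff they get different colours. -/
def IsTPartiteCluster {V : Type*} (t : ℕ) (H : SimpleGraph V) : Prop :=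
  ∃ f : V → Fin t, ∀ u v : V, u ≠ v → H.Reachable u v → (H.Adj u v ↔ f u ≠ f v)

/- A vertex of degree at least 2 in a star forest is the centre of its star, so such vertices lie
in distinct components of `G △ F` and there are at most `p` of them. A vertex not covered by `F`
has the same neighbours in `G` and in `G △ F`, and `F` covers at most `2k` vertices. -/

lemma Sym2.ncard_setOf_mem_le {α : Type*} (e : Sym2 α) : {v | v ∈ e}.ncard ≤ 2 := by
  induction e using Sym2.ind with
  | _ x y =>
    have hxy : {v | v ∈ s(x, y)} = {x, y} := by ext v; simp
    rw [hxy]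
    exact (Set.ncard_insert_le _ _).trans (by simp)

lemma Set.ncard_setOf_exists_mem_sym2_le {α : Type*} {F : Set (Sym2 α)} (hF : F.Finite) :
    {v | ∃ e ∈ F, v ∈ e}.ncard ≤ 2 * F.ncard := by
  have hcover : {v | ∃ e ∈ F, v ∈ e} = ⋃ e ∈ hF.toFinset, {v | v ∈ e} := by
    ext v; simp
  calc {v | ∃ e ∈ F, v ∈ e}.ncard
      ≤ ∑ e ∈ hF.toFinset, {v | v ∈ e}.ncard := hcover ▸ Finset.set_ncard_biUnion_le _ _
    _ ≤ hF.toFinset.card • 2 := Finset.sum_le_card_nsmul _ _ _ fun e _ ↦ e.ncard_setOf_mem_le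
    _ = 2 * F.ncard := by rw [Set.ncard_eq_toFinset_card F hF, smul_eq_mul, mul_comm]

lemma editedGraph_neighborSet_of_notMem {V : Type*} (G : SimpleGraph V) {F : Set (Sym2 V)}
    {v : V} (hv : ∀ e ∈ F, v ∉ e) : (editedGraph G F).neighborSet v = G.neighborSet v := by
  ext u
  have hvu : s(v, u) ∉ F := fun h ↦ hv _ h (Sym2.mem_mk_left v u)
  simp only [mem_neighborSet, editedGraph, fromEdgeSet_adj, Set.mem_symmDiff, mem_edgeSet]
  exact ⟨fun ⟨h, _⟩ ↦ h.elim And.left (absurd ·.1 hvu), fun h ↦ ⟨.inl ⟨h, hvu⟩, h.ne⟩⟩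

namespace IsStarGraph

variable {V : Type*} {H : SimpleGraph V}

lemma eq_center_of_two_le_ncard_neighborSet {v ctr : V}
    (hleaves : ∀ u ∈ (H.connectedComponentMk v).supp, ∀ w ∈ (H.connectedComponentMk v).supp,
      u ≠ ctr → w ≠ ctr → ¬ H.Adj u w)
    (hv : 2 ≤ (H.neighborSet v).ncard) : v = ctr := by
  by_contra hne
  have hsub : H.neighborSet v ⊆ {ctr} := fun w hw ↦ by
    by_contra hwc
    exact hleaves v rfl w (ConnectedComponent.sound (H.adj_symm hw).reachable) hne hwc hw
  have := Set.ncard_le_ncard hsub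
  simp only [Set.ncard_singleton] at this
  omega

lemma injOn_connectedComponentMk (hH : IsStarGraph H) :
    Set.InjOn H.connectedComponentMk {v | 2 ≤ (H.neighborSet v).ncard} := by
  intro u hu v hv huv
  obtain ⟨ctr, -, -, hleaves⟩ := hH (H.connectedComponentMk u)
  rw [eq_center_of_two_le_ncard_neighborSet hleaves hu,
    eq_center_of_two_le_ncard_neighborSet (huv ▸ hleaves) hv]

lemma ncard_two_le_ncard_neighborSet_le [Finite V] (hH : IsStarGraph H) :
    {v | 2 ≤ (H.neighborSet v).ncard}.ncard ≤ Nat.card H.ConnectedComponent := by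
  rw [← Set.ncard_univ]
  exact Set.ncard_le_ncard_of_injOn _ (fun _ _ ↦ Set.mem_univ _) hH.injOn_connectedComponentMk

end IsStarGraph

theorem starforest_degree_bound_general {V : Type*} [Fintype V] (G : SimpleGraph V)
    (F : Set (Sym2 V)) (k p : ℕ)
    (hF : F.ncard ≤ k)
    (hstar : IsStarGraph (editedGraph G F))
    (hp : Nat.card (editedGraph G F).ConnectedComponent = p) :
    {v : V | 2 ≤ (G.neighborSet v).ncard}.ncard ≤ p + 2 * k := by
  set H := editedGraph G F
  set covered : Set V := {v | ∃ e ∈ F, v ∈ e}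
  have hsub : {v | 2 ≤ (G.neighborSet v).ncard} ⊆ {v | 2 ≤ (H.neighborSet v).ncard} ∪ covered := by
    intro v hv
    by_cases hvc : v ∈ covered
    · exact .inr hvc
    · have hvF : ∀ e ∈ F, v ∉ e := fun e he hve ↦ hvc ⟨e, he, hve⟩
      left
      rwa [Set.mem_ofPred_eq, editedGraph_neighborSet_of_notMem G hvF]
  calc {v | 2 ≤ (G.neighborSet v).ncard}.ncard
      ≤ {v | 2 ≤ (H.neighborSet v).ncard}.ncard + covered.ncard :=
        (Set.ncard_le_ncard hsub).trans (Set.ncard_union_le _ _)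
    _ ≤ p + 2 * F.ncard :=
        add_le_add (hp ▸ hstar.ncard_two_le_ncard_neighborSet_le)
          (Set.ncard_setOf_exists_mem_sym2_le F.toFinite)
    _ ≤ p + 2 * k := by omega

/-- If `G △ F` with `|F| ≤ k` is a disjoint union of exactly `p` stars,
then at most `p + 2k` vertices of `G` have degree at least 2. -/
theorem starforest_degree_bound {V : Type*} [Fintype V] (G : SimpleGraph V)
    (F : Set (Sym2 V)) (k p : ℕ)
    (hdiag : ∀ e ∈ F, ¬ e.IsDiag) (hF : F.ncard ≤ k)
    (hstar : IsStarGraph (editedGraph G F))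
    (hp : Nat.card (editedGraph G F).ConnectedComponent = p) :
    {v : V | 2 ≤ (G.neighborSet v).ncard}.ncard ≤ p + 2 * k :=
  starforest_degree_bound_general G F k p hF hstar hp
end

section
/- Let G be a graph, S ⊆ V(G), and F the edge-modification set that (1) deletes every edge with both endpoints in S, (2) deletes every edge with both endpoints outside S, (3) for each vertex v ∉ S with at least one neighbor in S keeps exactly one edge to S and deletes the rest, and (4) joins each vertex outside S with no neighbor in S to an arbitrary vertex of S (assuming S is nonempty). Then G △ F is a starforest whose set of centers, for components with more than one vertex, is contained in S, and every vertex of S is in a distinct component. -/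
open SimpleGraph

/-- The graph with one kept/added edge `v — keep v` for each vertex `v ∉ S`:
this is exactly `G △ F` for the edit set `F` that deletes every edge inside `S`,
deletes every edge outside `S`, keeps exactly one edge from each `v ∉ S` with a
neighbour in `S` (namely to `keep v`), and attaches each `v ∉ S` with no neighbour
in `S` to the arbitrary vertex `keep v ∈ S`. -/
def starTarget {V : Type*} (S : Set V) (keep : V → V) : SimpleGraph V :=
  SimpleGraph.fromEdgeSet {e | ∃ v, v ∉ S ∧ e = s(v, keep v)}

/-- Editing as described w.r.t. a nonempty center set `S` yields a starforest whose
centers (of components with more than one vertex) lie in `S`, with every vertex of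
`S` in a distinct component. -/
theorem starTarget_isStarforest {V : Type*} (G : SimpleGraph V) (S : Set V)
    (hS : S.Nonempty) (keep : V → V)
    (hkeep : ∀ v ∉ S, keep v ∈ S ∧
      (G.Adj v (keep v) ∨ ∀ s ∈ S, ¬ G.Adj v s)) :
    IsStarGraph (starTarget S keep) ∧
    (∀ c : (starTarget S keep).ConnectedComponent, 1 < c.supp.ncard →
      ∃ ctr ∈ S, ctr ∈ c.supp ∧
        ∀ v ∈ c.supp, v ≠ ctr → (starTarget S keep).Adj ctr v) ∧
    (∀ s ∈ S, ∀ s' ∈ S, (starTarget S keep).Reachable s s' → s = s') := by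
  classical
  have hkS : ∀ v ∉ S, keep v ∈ S := fun v hv => (hkeep v hv).1
  set H := starTarget S keep with hH
  have hadj : ∀ u v, H.Adj u v ↔ (u ∉ S ∧ v = keep u) ∨ (v ∉ S ∧ u = keep v) := by
    intro u v
    constructor
    · rintro ⟨⟨w, hw, he⟩, hne⟩
      rw [Sym2.eq_iff] at he
      rcases he with ⟨h1, h2⟩ | ⟨h1, h2⟩
      · exact Or.inl ⟨h1 ▸ hw, by rw [h2, h1]⟩
      · exact Or.inr ⟨h2 ▸ hw, by rw [h1, h2]⟩
    · rintro (⟨hu, rfl⟩ | ⟨hv, rfl⟩)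
      · exact ⟨⟨u, hu, rfl⟩, fun h => hu (h ▸ hkS u hu)⟩
      · exact ⟨⟨v, hv, Sym2.eq_swap⟩, fun h => hv (h.symm ▸ hkS v hv)⟩
  let f : V → V := fun v => if v ∈ S then v else keep v
  have hfS : ∀ v, f v ∈ S := by
    intro v; by_cases h : v ∈ S <;> simp [f, h, hkS v]
  have hfid : ∀ v ∈ S, f v = v := fun v hv => by simp [f, hv]
  have hreach_f : ∀ v, H.Reachable v (f v) := by
    intro v; by_cases h : v ∈ S
    · simp only [f, if_pos h]; exact Reachable.refl v
    · exact ((hadj v (f v)).mpr (Or.inl ⟨h, by simp [f, h]⟩)).reachable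
  have hconst : ∀ u v, H.Adj u v → f u = f v := by
    intro u v h
    rcases (hadj u v).1 h with ⟨hu, rfl⟩ | ⟨hv, rfl⟩
    · simp [f, hu, hkS u hu]
    · simp [f, hv, hkS v hv]
  have hreach_eq : ∀ u v, H.Reachable u v → f u = f v := by
    rintro u v ⟨w⟩
    induction w with
    | nil => rfl
    | cons h _ ih => exact (hconst _ _ h).trans ih
  have key : ∀ c : H.ConnectedComponent, ∃ ctr ∈ S, ctr ∈ c.supp ∧
      (∀ v ∈ c.supp, v ≠ ctr → H.Adj ctr v) ∧
      (∀ u ∈ c.supp, ∀ v ∈ c.supp, u ≠ ctr → v ≠ ctr → ¬ H.Adj u v) := by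
    intro c
    obtain ⟨v, hv⟩ := c.exists_rep
    refine ⟨f v, hfS v, ?_, ?_, ?_⟩
    · rw [ConnectedComponent.mem_supp_iff, ← hv]
      exact ConnectedComponent.sound (hreach_f v).symm
    · intro w hw hne
      rw [ConnectedComponent.mem_supp_iff, ← hv] at hw
      have hfw : f w = f v := hreach_eq _ _ (ConnectedComponent.exact hw)
      have hwS : w ∉ S := fun h => hne (by rw [← hfw, hfid w h])
      exact (hadj (f v) w).mpr (Or.inr ⟨hwS, by rw [← hfw]; simp [f, hwS]⟩)
    · intro a ha b hb hna hnb hab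
      rw [ConnectedComponent.mem_supp_iff, ← hv] at ha hb
      have hfa : f a = f v := hreach_eq _ _ (ConnectedComponent.exact ha)
      have hfb : f b = f v := hreach_eq _ _ (ConnectedComponent.exact hb)
      have haS : a ∉ S := fun h => hna (by rw [← hfa, hfid a h])
      have hbS : b ∉ S := fun h => hnb (by rw [← hfb, hfid b h])
      rcases (hadj a b).1 hab with ⟨_, rfl⟩ | ⟨_, rfl⟩
      · exact hbS (hkS a haS)
      · exact haS (hkS b hbS)
  refine ⟨?_, ?_, ?_⟩
  · intro c
    obtain ⟨ctr, _, h1, h2, h3⟩ := key c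
    exact ⟨ctr, h1, h2, h3⟩
  · intro c _
    obtain ⟨ctr, hc, h1, h2, _⟩ := key c
    exact ⟨ctr, hc, h1, h2⟩
  · intro s hs s' hs' hr
    have := hreach_eq _ _ hr
    rwa [hfid s hs, hfid s' hs'] at this
end

section
/- In the annotated bicluster editing problem, assigning each vertex v ∈ B to a part A_i minimizing cost_i(v) = |A_i \ N(v)| + |N(v) \ A_i| yields an optimal solution: the minimum total number of edge edits needed to turn the bipartite graph G = (A, B, E) into a disjoint union of p complete bipartite graphs where the i-th has left side exactly A_i equals the sum over v ∈ B of min_i cost_i(v). -/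
/-!
Both `G` and every target graph are bipartite between `A` and `B`, hence so is their symmetric
difference, whose edges can therefore be counted at the `B` side: the cost of the target given by
an assignment `g` is `∑_{v ∈ B} |N(v) ∆ A_{g v}|`. Each summand depends only on the part chosen
for `v`, so the sum is minimised by choosing for every `v` independently a cheapest part.
-/

open SimpleGraph

/-- The target graph for annotated bicluster editing determined by an assignment
`g` of the vertices of `B` to the parts: it is the disjoint union of the complete
bipartite graphs whose left sides are exactly the parts `P i ⊆ A` and whose right
sides are the classes `B_i = {w ∈ B | g w = i}`. -/
def annotTarget {V : Type*} (A B : Finset V) {p : ℕ} (P : Fin p → Finset V)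
    (g : V → Fin p) (hdisj : ∀ x : V, ¬ (x ∈ A ∧ x ∈ B)) : SimpleGraph V where
  Adj u w := (u ∈ A ∧ w ∈ B ∧ u ∈ P (g w)) ∨ (w ∈ A ∧ u ∈ B ∧ w ∈ P (g u))
  symm := ⟨fun u w h => h.symm⟩
  loopless := ⟨fun x h => by
    rcases h with ⟨h1, h2, _⟩ | ⟨h1, h2, _⟩ <;> exact hdisj x ⟨h1, h2⟩⟩

open Finset
open scoped symmDiff

theorem Finset.card_symmDiff_eq_add {α : Type*} [DecidableEq α] (s t : Finset α) :
    #(s ∆ t) = #(s \ t) + #(t \ s) :=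
  card_union_of_disjoint disjoint_sdiff_sdiff

theorem Finset.isLeast_range_sum_apply {ι κ M : Type*} [Fintype κ] [AddCommMonoid M]
    [LinearOrder M] [IsOrderedAddMonoid M] (s : Finset ι) (f : ι → κ → M)
    (hκ : (univ : Finset κ).Nonempty) :
    IsLeast (Set.range fun g : ι → κ => ∑ i ∈ s, f i (g i)) (∑ i ∈ s, univ.inf' hκ (f i)) := by
  constructor
  · choose g _ hg using fun i => exists_mem_eq_inf' hκ (f i)
    exact ⟨g, sum_congr rfl fun i _ => (hg i).symm⟩
  · rintro _ ⟨g, rfl⟩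
    exact sum_le_sum fun i _ => inf'_le _ (mem_univ (g i))

namespace SimpleGraph

variable {V : Type*} {G H : SimpleGraph V}

theorem symmDiff_adj {u w : V} :
    (G ∆ H).Adj u w ↔ G.Adj u w ∧ ¬H.Adj u w ∨ H.Adj u w ∧ ¬G.Adj u w :=
  Iff.rfl

theorem edgeSet_symmDiff : (G ∆ H).edgeSet = G.edgeSet ∆ H.edgeSet := by
  rw [symmDiff_def, symmDiff_def, edgeSet_sup, edgeSet_sdiff, edgeSet_sdiff]
  rfl

theorem IsBipartiteWith.symmDiff {s t : Set V} (hG : G.IsBipartiteWith s t) (hH : H.IsBipartiteWith s t) :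
    (G ∆ H).IsBipartiteWith s t where
  disjoint := hG.disjoint
  mem_of_adj _ _ h := h.elim (fun h => hG.mem_of_adj h.1) fun h => hH.mem_of_adj h.1

theorem IsBipartiteWith.ncard_symmDiff_edgeSet [Fintype V] [DecidableEq V] [DecidableRel G.Adj]
    [DecidableRel H.Adj] {s t : Finset V} (hG : G.IsBipartiteWith s t)
    (hH : H.IsBipartiteWith s t) :
    (G.edgeSet ∆ H.edgeSet).ncard = ∑ v ∈ t, #(G.neighborFinset v ∆ H.neighborFinset v) := by
  classical
  rw [← edgeSet_symmDiff, ← coe_edgeFinset, Set.ncard_coe_finset,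
    ← isBipartiteWith_sum_degrees_eq_card_edges' (hG.symmDiff hH)]
  refine sum_congr rfl fun v _ => ?_
  rw [← card_neighborFinset_eq_degree]
  congr 1
  ext w
  simp [Finset.mem_symmDiff, symmDiff_adj]

end SimpleGraph

theorem isBipartiteWith_of_forall_adj {V : Type*} {A B : Finset V} {G : SimpleGraph V}
    (hdisj : ∀ x : V, ¬ (x ∈ A ∧ x ∈ B))
    (hbip : ∀ u w, G.Adj u w → (u ∈ A ∧ w ∈ B) ∨ (u ∈ B ∧ w ∈ A)) :
    G.IsBipartiteWith A B where
  disjoint := Set.disjoint_left.2 fun x hA hB => hdisj x ⟨hA, hB⟩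
  mem_of_adj := hbip

section AnnotatedBicluster

variable {V : Type*} {A B : Finset V} {p : ℕ} {P : Fin p → Finset V} {g : V → Fin p}
  {hdisj : ∀ x : V, ¬ (x ∈ A ∧ x ∈ B)}

theorem annotTarget_isBipartiteWith : (annotTarget A B P g hdisj).IsBipartiteWith A B :=
  isBipartiteWith_of_forall_adj hdisj fun _ _ h =>
    h.imp (fun h => ⟨h.1, h.2.1⟩) fun h => ⟨h.2.1, h.1⟩

theorem neighborFinset_annotTarget [Fintype V] [DecidableRel (annotTarget A B P g hdisj).Adj]
    (hPsub : ∀ i, P i ⊆ A) {w : V} (hw : w ∈ B) :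
    (annotTarget A B P g hdisj).neighborFinset w = P (g w) := by
  ext u
  rw [mem_neighborFinset]
  refine ⟨?_, fun hu => Or.inr ⟨hPsub _ hu, hw, hu⟩⟩
  rintro (⟨hwA, -⟩ | ⟨-, -, hu⟩)
  · exact absurd ⟨hwA, hw⟩ (hdisj w)
  · exact hu

theorem ncard_symmDiff_edgeSet_annotTarget [Fintype V] [DecidableEq V] {G : SimpleGraph V}
    [DecidableRel G.Adj] (hbip : ∀ u w, G.Adj u w → (u ∈ A ∧ w ∈ B) ∨ (u ∈ B ∧ w ∈ A))
    (hPsub : ∀ i, P i ⊆ A) :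
    (G.edgeSet ∆ (annotTarget A B P g hdisj).edgeSet).ncard =
      ∑ v ∈ B, (#(P (g v) \ G.neighborFinset v) + #(G.neighborFinset v \ P (g v))) := by
  classical
  rw [(isBipartiteWith_of_forall_adj hdisj hbip).ncard_symmDiff_edgeSet
    annotTarget_isBipartiteWith]
  refine sum_congr rfl fun v hv => ?_
  rw [neighborFinset_annotTarget hPsub hv, card_symmDiff_eq_add, add_comm]

end AnnotatedBicluster

theorem annotated_bicluster_optimal_general {V : Type*} [Fintype V] [DecidableEq V]
    (G : SimpleGraph V) [DecidableRel G.Adj] (A B : Finset V)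
    (hdisj : ∀ x : V, ¬ (x ∈ A ∧ x ∈ B))
    (hbip : ∀ u w, G.Adj u w → (u ∈ A ∧ w ∈ B) ∨ (u ∈ B ∧ w ∈ A))
    (p : ℕ) (hp : 0 < p) (P : Fin p → Finset V)
    (hPsub : ∀ i, P i ⊆ A) :
    IsLeast
      {n : ℕ | ∃ g : V → Fin p,
        n = (symmDiff G.edgeSet (annotTarget A B P g hdisj).edgeSet).ncard}
      (∑ v ∈ B,
        Finset.univ.inf' (Finset.univ_nonempty_iff.mpr ⟨⟨0, hp⟩⟩)
          (fun i => (P i \ G.neighborFinset v).card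
            + (G.neighborFinset v \ P i).card)) := by
  have hcosts : {n : ℕ | ∃ g : V → Fin p,
      n = (symmDiff G.edgeSet (annotTarget A B P g hdisj).edgeSet).ncard} =
      Set.range fun g : V → Fin p => ∑ v ∈ B,
        (#(P (g v) \ G.neighborFinset v) + #(G.neighborFinset v \ P (g v))) := by
    ext n
    simp only [Set.mem_ofPred_eq, Set.mem_range, ncard_symmDiff_edgeSet_annotTarget hbip hPsub,
      eq_comm]
  rw [hcosts]
  exact isLeast_range_sum_apply B
    (fun v i => #(P i \ G.neighborFinset v) + #(G.neighborFinset v \ P i)) _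

/-- Greedy assignment is optimal for annotated bicluster editing: the minimum
number of edge edits turning the bipartite graph `G = (A,B,E)` into a disjoint
union of `p` complete bipartite graphs with left sides exactly the parts `P i`
equals `∑_{v ∈ B} min_i (|A_i \ N(v)| + |N(v) \ A_i|)`. -/
theorem annotated_bicluster_optimal {V : Type*} [Fintype V] [DecidableEq V]
    (G : SimpleGraph V) [DecidableRel G.Adj] (A B : Finset V)
    (hdisj : ∀ x : V, ¬ (x ∈ A ∧ x ∈ B)) (hcover : ∀ x : V, x ∈ A ∨ x ∈ B)
    (hbip : ∀ u w, G.Adj u w → (u ∈ A ∧ w ∈ B) ∨ (u ∈ B ∧ w ∈ A))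
    (p : ℕ) (hp : 0 < p) (P : Fin p → Finset V)
    (hPsub : ∀ i, P i ⊆ A) (hPne : ∀ i, (P i).Nonempty)
    (hPdisj : ∀ i j, i ≠ j → Disjoint (P i) (P j))
    (hPcover : ∀ x ∈ A, ∃ i, x ∈ P i) :
    IsLeast
      {n : ℕ | ∃ g : V → Fin p,
        n = (symmDiff G.edgeSet (annotTarget A B P g hdisj).edgeSet).ncard}
      (∑ v ∈ B,
        Finset.univ.inf' (Finset.univ_nonempty_iff.mpr ⟨⟨0, hp⟩⟩)
          (fun i => (P i \ G.neighborFinset v).card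
            + (G.neighborFinset v \ P i).card)) :=
  annotated_bicluster_optimal_general G A B hdisj hbip p hp P hPsub
end

section
/- Let C_n be the cycle on n vertices where n is divisible by 6 and n ≥ 6. The minimum number of edge deletions turning C_n into a starforest is n/3, and every deletion set of size n/3 achieving this deletes exactly every third consecutive edge of the cycle (so there are exactly 3 such optimal deletion sets). -/
open SimpleGraph

/-!
Number the edges of `C_n` by `Fin n`, edge `i` joining `i` and `i + 1`. A starforest contains
no path with three edges, so a deletion set `T` meets every window `{i, i + 1, i + 2}` of three
consecutive edges. Every edge lies in exactly three of the `n` windows, hence `3 |T| ≥ n`. In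
case of equality each window contains exactly one edge of `T`; comparing the windows at `i` and
`i + 1` shows that `T` is invariant under `i ↦ i + 3`, so it is a residue class mod 3.
Conversely, deleting the edges `i ≡ 0 (mod 3)` leaves a disjoint union of paths with two edges.
-/

open Finset

section FinArith

variable {n : ℕ} [NeZero n]

theorem Fin.add_one_add_one_ne_self (hn : 2 < n) (i : Fin n) : i + 1 + 1 ≠ i := by
  rw [add_assoc, Ne, add_eq_left, Fin.ext_iff, Fin.val_add, Fin.val_one',
    Nat.mod_eq_of_lt (by omega : 1 < n)]
  simp [Nat.mod_eq_of_lt hn]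

theorem Fin.add_one_add_one_add_one_ne_self (hn : 3 < n) (i : Fin n) : i + 1 + 1 + 1 ≠ i := by
  rw [add_assoc, add_assoc, Ne, add_eq_left, Fin.ext_iff, Fin.val_add, Fin.val_add, Fin.val_one',
    Nat.mod_eq_of_lt (by omega : 1 < n), Nat.mod_eq_of_lt (by omega : 2 < n)]
  simp [Nat.mod_eq_of_lt hn]

theorem Fin.val_add_one_mod_three (h3 : 3 ∣ n) (i : Fin n) :
    ((i + 1 : Fin n) : ℕ) % 3 = ((i : ℕ) + 1) % 3 := by
  have : 1 < n := by have := Nat.le_of_dvd (NeZero.pos n) h3; omega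
  rw [Fin.val_add, Fin.val_one', Nat.mod_eq_of_lt this, Nat.mod_mod_of_dvd _ h3]

end FinArith

theorem SimpleGraph.mem_supp_connectedComponentMk_iff {V : Type*} {H : SimpleGraph V} {u v : V} :
    u ∈ (H.connectedComponentMk v).supp ↔ H.Reachable u v := by
  rw [ConnectedComponent.mem_supp_iff, ConnectedComponent.eq]

namespace IsStarGraph

variable {V : Type*} {H : SimpleGraph V}

theorem not_adj_of_adj_of_adj (hH : IsStarGraph H) {a b c d : V} (hab : H.Adj a b)
    (hbc : H.Adj b c) (hac : a ≠ c) (had : a ≠ d) (hbd : b ≠ d) : ¬H.Adj c d := by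
  intro hcd
  obtain ⟨ctr, -, -, hleaf⟩ := hH (H.connectedComponentMk b)
  have hedge : ∀ ⦃x y⦄, H.Reachable x b → H.Adj x y → x = ctr ∨ y = ctr := by
    intro x y hx hxy
    by_contra! hne
    exact hleaf x (mem_supp_connectedComponentMk_iff.2 hx) y
      (mem_supp_connectedComponentMk_iff.2 (hxy.symm.reachable.trans hx)) hne.1 hne.2 hxy
  have hcb : H.Reachable c b := hbc.symm.reachable
  rcases hedge hab.reachable hab with rfl | rfl <;>
    rcases hedge hcb hcd with rfl | rfl <;>
    rcases hedge .rfl hbc with h | h <;>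
    simp_all [H.ne_of_adj hab, H.ne_of_adj hbc, H.ne_of_adj hcd]

theorem of_center (f : V → V) (hf : ∀ ⦃u v⦄, H.Adj u v → f u = f v)
    (hcenter : ∀ v, v ≠ f v → H.Adj (f v) v)
    (hedge : ∀ ⦃u v⦄, H.Adj u v → u = f u ∨ v = f v) :
    IsStarGraph H := by
  have hreach : ∀ ⦃u v⦄, H.Reachable u v → f u = f v := by
    rintro u v ⟨p⟩
    induction p with
    | nil => rfl
    | cons h _ ih => exact (hf h).trans ih
  refine ConnectedComponent.ind fun v => ?_
  simp only [mem_supp_connectedComponentMk_iff]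
  refine ⟨f v, ?_, fun w hw hne => ?_, fun u hu w hw hu' hw' huw => ?_⟩
  · by_cases hv : v = f v
    · rw [← hv]
    · exact (hcenter v hv).reachable
  · rw [← hreach hw] at hne ⊢
    exact hcenter w hne
  · rw [← hreach hu] at hu'
    rw [← hreach hw] at hw'
    exact (hedge huw).elim hu' hw'

end IsStarGraph

section CycleEdges

variable {n : ℕ} [NeZero n]

def cycleEdge (i : Fin n) : Sym2 (Fin n) := s(i, i + 1)

theorem cycleGraph_adj_iff_eq_add_one (hn : 1 < n) {u v : Fin n} :
    (cycleGraph n).Adj u v ↔ v = u + 1 ∨ u = v + 1 := by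
  obtain ⟨m, rfl⟩ : ∃ m, n = m + 2 := ⟨n - 2, by omega⟩
  rw [cycleGraph_adj, sub_eq_iff_eq_add', sub_eq_iff_eq_add', or_comm]

theorem cycleEdge_injective (hn : 2 < n) : Function.Injective (cycleEdge (n := n)) := by
  intro i j h
  rcases Sym2.eq_iff.1 h with ⟨h, -⟩ | ⟨rfl, h⟩
  · exact h
  · exact absurd h (Fin.add_one_add_one_ne_self hn j)

theorem edgeSet_cycleGraph (hn : 1 < n) : (cycleGraph n).edgeSet = Set.range cycleEdge := by
  ext e
  induction e using Sym2.ind with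
  | _ u v =>
    simp only [mem_edgeSet, cycleGraph_adj_iff_eq_add_one hn, Set.mem_range, cycleEdge,
      Sym2.eq_iff]
    aesop

theorem deleteEdges_image_cycleEdge_adj (hn : 2 < n) {S : Set (Fin n)} {u v : Fin n} :
    ((cycleGraph n).deleteEdges (cycleEdge '' S)).Adj u v ↔
      (v = u + 1 ∧ u ∉ S) ∨ (u = v + 1 ∧ v ∉ S) := by
  rw [deleteEdges_adj, cycleGraph_adj_iff_eq_add_one (by omega)]
  have hmem := fun i => (cycleEdge_injective hn).mem_set_image (s := S) (a := i)
  constructor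
  · rintro ⟨rfl | rfl, h⟩
    · exact .inl ⟨rfl, fun hu => h ((hmem u).2 hu)⟩
    · rw [Sym2.eq_swap] at h
      exact .inr ⟨rfl, fun hv => h ((hmem v).2 hv)⟩
  · rintro (⟨rfl, hu⟩ | ⟨rfl, hv⟩)
    · exact ⟨.inl rfl, fun h => hu ((hmem u).1 h)⟩
    · refine ⟨.inr rfl, fun h => hv ((hmem v).1 ?_)⟩
      rwa [Sym2.eq_swap] at h

theorem exists_finset_eq_image_cycleEdge (hn : 1 < n) {D : Set (Sym2 (Fin n))}
    (hD : D ⊆ (cycleGraph n).edgeSet) : ∃ T : Finset (Fin n), D = cycleEdge '' T := by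
  rw [edgeSet_cycleGraph hn, Set.subset_range_iff_exists_image_eq] at hD
  obtain ⟨T, rfl⟩ := hD
  exact ⟨T.toFinite.toFinset, by simp⟩

theorem ncard_image_cycleEdge (hn : 2 < n) (T : Finset (Fin n)) :
    (cycleEdge '' (T : Set (Fin n))).ncard = #T := by
  rw [Set.ncard_image_of_injective _ (cycleEdge_injective hn), Set.ncard_coe_finset]

end CycleEdges

theorem Finset.sum_ite_add_mem {G : Type*} [AddGroup G] [Fintype G] [DecidableEq G]
    (T : Finset G) (c : G) : ∑ g, (if g + c ∈ T then 1 else 0) = #T := by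
  rw [Fintype.sum_equiv (Equiv.addRight c) (fun g => if g + c ∈ T then 1 else 0)
    (fun g => if g ∈ T then 1 else 0) fun _ => rfl, sum_boole]
  simp

section Windows

variable {n : ℕ} [NeZero n] (T : Finset (Fin n))

def windowCount (i : Fin n) : ℕ :=
  (if i ∈ T then 1 else 0) + (if i + 1 ∈ T then 1 else 0) + (if i + 1 + 1 ∈ T then 1 else 0)

def everyThird (r : ℕ) : Finset (Fin n) := {i | (i : ℕ) % 3 = r}

theorem sum_windowCount : ∑ i, windowCount T i = 3 * #T := by
  have h₀ : ∑ i : Fin n, (if i ∈ T then 1 else 0) = #T := by simp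
  simp only [windowCount, sum_add_distrib, add_assoc, sum_ite_add_mem, h₀]
  ring

variable {T}

theorem le_three_mul_card (hT : ∀ i, 0 < windowCount T i) : n ≤ 3 * #T :=
  calc n = ∑ _i : Fin n, 1 := by simp
    _ ≤ ∑ i, windowCount T i := sum_le_sum fun i _ => hT i
    _ = 3 * #T := sum_windowCount T

theorem windowCount_eq_one_of_three_mul_card_eq (hT : ∀ i, 0 < windowCount T i)
    (hcard : 3 * #T = n) (i : Fin n) :
    windowCount T i = 1 := by
  have hsum : ∑ _i : Fin n, 1 = ∑ i, windowCount T i := by simp [sum_windowCount, hcard]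
  exact ((sum_eq_sum_iff_of_le fun i _ => hT i).1 hsum i (mem_univ i)).symm

theorem three_mul_card_of_windowCount_eq_one (hT : ∀ i, windowCount T i = 1) : 3 * #T = n := by
  simp [← sum_windowCount, hT]

theorem windowCount_everyThird (h3 : 3 ∣ n) {r : ℕ} (hr : r < 3) (i : Fin n) :
    windowCount (everyThird r) i = 1 := by
  have h₁ := Fin.val_add_one_mod_three h3 i
  have h₂ := Fin.val_add_one_mod_three h3 (i + 1)
  simp only [windowCount, everyThird, mem_filter, mem_univ, true_and]
  split_ifs <;> omega

theorem mem_iff_add_three_mem (hT : ∀ i, windowCount T i = 1) (i : Fin n) :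
    i ∈ T ↔ i + 1 + 1 + 1 ∈ T := by
  have h₀ := hT i
  have h₁ := hT (i + 1)
  simp only [windowCount] at h₀ h₁
  split_ifs at h₀ h₁ <;> simp_all

theorem mem_iff_mem_of_mod_three_eq (hT : ∀ i : Fin n, i ∈ T ↔ i + 1 + 1 + 1 ∈ T)
    {i j : Fin n} (hij : (i : ℕ) % 3 = j % 3) : i ∈ T ↔ j ∈ T := by
  have step : ∀ d (i : Fin n) (hd : (i : ℕ) + 3 * d < n),
      i ∈ T ↔ (⟨i + 3 * d, hd⟩ : Fin n) ∈ T := by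
    intro d
    induction d with
    | zero => exact fun i _ => Iff.rfl
    | succ d ih =>
      intro i hd
      rw [ih i (by omega), hT]
      congr!
      simp only [Fin.val_add_eq_ite, Fin.val_one', Nat.mod_eq_of_lt (by omega : 1 < n)]
      split_ifs <;> omega
  wlog hle : (i : ℕ) ≤ j generalizing i j
  · exact (this hij.symm (by omega)).symm
  obtain ⟨d, hd⟩ : ∃ d, (j : ℕ) = i + 3 * d := ⟨(j - i) / 3, by omega⟩
  rw [step d i (hd ▸ j.2)]
  congr!
  exact hd.symm

theorem eq_everyThird_of_windowCount_eq_one (h3 : 3 ∣ n) (hT : ∀ i, windowCount T i = 1) :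
    ∃ r < 3, T = everyThird r := by
  obtain ⟨s, hs⟩ : T.Nonempty := by
    rw [← card_pos]
    have := three_mul_card_of_windowCount_eq_one hT
    have := NeZero.pos n
    omega
  refine ⟨s % 3, Nat.mod_lt _ (by norm_num), eq_of_superset_of_card_ge ?_ ?_⟩
  · intro i hi
    simp only [everyThird, mem_filter, mem_univ, true_and] at hi
    exact (mem_iff_mem_of_mod_three_eq (mem_iff_add_three_mem hT) (by omega)).2 hs
  · have := three_mul_card_of_windowCount_eq_one hT
    have := three_mul_card_of_windowCount_eq_one
      (windowCount_everyThird h3 (s.val.mod_lt (by norm_num)))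
    omega

end Windows

section StarDeletion

variable {n : ℕ} [NeZero n]

theorem windowCount_pos_of_isStarGraph (hn : 3 < n) {T : Finset (Fin n)}
    (hT : IsStarGraph ((cycleGraph n).deleteEdges (cycleEdge '' T))) (i : Fin n) :
    0 < windowCount T i := by
  by_contra! h
  simp only [windowCount, nonpos_iff_eq_zero, Nat.add_eq_zero_iff, ite_eq_right_iff,
    one_ne_zero, imp_false] at h
  obtain ⟨⟨h₀, h₁⟩, h₂⟩ := h
  have hadj : ∀ j, j ∉ T → ((cycleGraph n).deleteEdges (cycleEdge '' T)).Adj j (j + 1) :=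
    fun j hj => (deleteEdges_image_cycleEdge_adj (by omega)).2 (.inl ⟨rfl, hj⟩)
  exact hT.not_adj_of_adj_of_adj (hadj i h₀) (hadj _ h₁)
    (Fin.add_one_add_one_ne_self (by omega) i).symm (Fin.add_one_add_one_add_one_ne_self hn i).symm
    (Fin.add_one_add_one_ne_self (by omega) (i + 1)).symm (hadj _ h₂)

theorem isStarGraph_deleteEdges_everyThird_zero (h3 : 3 ∣ n) :
    IsStarGraph ((cycleGraph n).deleteEdges (cycleEdge '' (everyThird 0 : Finset (Fin n)))) := by
  have hn : 2 < n := by have := Nat.le_of_dvd (NeZero.pos n) h3; omega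
  have hsucc := Fin.val_add_one_mod_three h3
  have hpred : ∀ v : Fin n, ((v - 1 : Fin n) : ℕ) % 3 = (v + 2) % 3 := fun v => by
    have := hsucc (v - 1)
    rw [sub_add_cancel] at this
    omega
  -- the components are the paths `3k+1 — 3k+2 — 3k+3`, centred at `3k+2`
  refine IsStarGraph.of_center
    (fun v => if (v : ℕ) % 3 = 1 then v + 1 else if (v : ℕ) % 3 = 0 then v - 1 else v)
    ?_ ?_ ?_ <;>
    simp only [deleteEdges_image_cycleEdge_adj hn, everyThird, coe_filter, mem_univ, true_and,
      Set.mem_ofPred_eq]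
  · rintro u v (⟨rfl, hu⟩ | ⟨rfl, hv⟩)
    · have := hsucc u
      split_ifs <;> first | rfl | omega | exact (add_sub_cancel_right u 1).symm
    · have := hsucc v
      split_ifs <;> first | rfl | omega | exact add_sub_cancel_right v 1
  · intro v hv
    have := hpred v
    split_ifs at hv ⊢
    · exact .inr ⟨rfl, by omega⟩
    · exact .inl ⟨(sub_add_cancel v 1).symm, by omega⟩
    · exact absurd rfl hv
  · rintro u v (⟨rfl, hu⟩ | ⟨rfl, hv⟩)
    · have := hsucc u
      split_ifs <;> first | exact .inl rfl | exact .inr rfl | omega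
    · have := hsucc v
      split_ifs <;> first | exact .inl rfl | exact .inr rfl | omega

end StarDeletion

/-- For a cycle of length `n` divisible by 6, the minimum number of edge deletions
producing a starforest is `n/3`, and every optimal deletion set consists of every
third consecutive edge of the cycle (the edges `e_i = {i, i+1}` with `i ≡ r (mod 3)`
for some `r < 3`). -/
theorem cycle_starforest_deletion (n : ℕ) (hn : 6 ≤ n) (hdvd : 6 ∣ n) :
    IsLeast
      {m : ℕ | ∃ D : Set (Sym2 (Fin n)), D ⊆ (SimpleGraph.cycleGraph n).edgeSet ∧
        D.ncard = m ∧ IsStarGraph ((SimpleGraph.cycleGraph n).deleteEdges D)}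
      (n / 3) ∧
    ∀ D : Set (Sym2 (Fin n)), D ⊆ (SimpleGraph.cycleGraph n).edgeSet →
      IsStarGraph ((SimpleGraph.cycleGraph n).deleteEdges D) → D.ncard = n / 3 →
      ∃ r : ℕ, r < 3 ∧
        D = {e | ∃ i : Fin n, (i : ℕ) % 3 = r ∧
          e = s(i, i + (⟨1, by omega⟩ : Fin n))} := by
  have : NeZero n := ⟨by omega⟩
  have h3 : 3 ∣ n := dvd_trans (by norm_num) hdvd
  have hone : (⟨1, by omega⟩ : Fin n) = 1 := Fin.ext (Nat.mod_eq_of_lt (by omega)).symm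
  refine ⟨⟨⟨cycleEdge '' ↑(everyThird 0 : Finset (Fin n)), ?_, ?_,
    isStarGraph_deleteEdges_everyThird_zero h3⟩, ?_⟩, ?_⟩
  · rw [edgeSet_cycleGraph (by omega)]
    exact Set.image_subset_range _ _
  · have := three_mul_card_of_windowCount_eq_one (windowCount_everyThird h3 (r := 0) (by norm_num))
    rw [ncard_image_cycleEdge (by omega)]
    omega
  · rintro m ⟨D, hD, rfl, hstar⟩
    obtain ⟨T, rfl⟩ := exists_finset_eq_image_cycleEdge (by omega) hD
    have := le_three_mul_card (windowCount_pos_of_isStarGraph (by omega) hstar)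
    rw [ncard_image_cycleEdge (by omega)]
    omega
  · intro D hD hstar hcard
    obtain ⟨T, rfl⟩ := exists_finset_eq_image_cycleEdge (by omega) hD
    rw [ncard_image_cycleEdge (by omega)] at hcard
    have hpos := windowCount_pos_of_isStarGraph (by omega) hstar
    obtain ⟨r, hr, rfl⟩ := eq_everyThird_of_windowCount_eq_one h3
      (windowCount_eq_one_of_three_mul_card_eq hpos (by omega))
    refine ⟨r, hr, ?_⟩
    ext e
    simp [cycleEdge, everyThird, hone, eq_comm]
end

section
/- Deleting any single edge from a cycle C_n with n ≥ 5 leaves a graph containing an induced path on 4 vertices; hence at least two edge edits are needed to make C_n (n ≥ 5) a starforest, and more generally at least ⌈n/3⌉ deletions are needed. -/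
open SimpleGraph

open Finset

/-!
Deleting an edge `uv` from `C_n` does not touch the induced path `C_n - u` on `n - 1 ≥ 4`
vertices, which contains an induced `P₄`.

For the counting bound, note that in a starforest every edge of a component contains its centre,
so no component contains two vertex-disjoint edges; in particular a starforest contains no
(not necessarily induced) path `a - b - c - d` on four distinct vertices. Thus among any three
consecutive edges of `C_n` at least one is deleted, i.e. the starting points of deleted edges
meet every window `{x, x + 1, x + 2}`, and there are at least `n / 3` of them.
-/

namespace SimpleGraph

variable {V W : Type*} {G : SimpleGraph V} {H : SimpleGraph W}

def Embedding.toDeleteEdges (f : H ↪g G) {D : Set (Sym2 V)} (hD : ∀ a b, s(f a, f b) ∉ D) :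
    H ↪g G.deleteEdges D where
  toEmbedding := f.toEmbedding
  map_rel_iff' {a b} := by simp [hD a b]

theorem cycleGraph_adj_add_right {n : ℕ} [NeZero n] (u v r : Fin n) :
    (cycleGraph n).Adj (u + r) (v + r) ↔ (cycleGraph n).Adj u v := by
  simp only [cycleGraph_adj', add_sub_add_right_eq_sub]

theorem cycleGraph_adj_add_one {n : ℕ} [NeZero n] (hn : 2 ≤ n) (x : Fin n) :
    (cycleGraph n).Adj x (x + 1) := by
  rw [cycleGraph_adj', add_sub_cancel_left, Fin.val_one', Nat.mod_eq_of_lt hn]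
  exact Or.inr rfl

def cycleGraphAddRight {n : ℕ} [NeZero n] (r : Fin n) : cycleGraph n ≃g cycleGraph n :=
  ⟨Equiv.addRight r, cycleGraph_adj_add_right _ _ r⟩

theorem cycleGraph_adj_castLE_iff {k n : ℕ} (h : k < n) {a b : Fin k} :
    (cycleGraph n).Adj (a.castLE h.le) (b.castLE h.le) ↔ (pathGraph k).Adj a b := by
  have hsub (x y : Fin k) : (x.castLE h.le - y.castLE h.le).val = 1 ↔ x.val = y.val + 1 := by
    have := x.isLt
    rcases le_or_gt (y.castLE h.le) (x.castLE h.le) with hyx | hxy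
    · rw [Fin.coe_sub_iff_le.2 hyx, Fin.val_castLE, Fin.val_castLE]
      omega
    · rw [Fin.coe_sub_iff_lt.2 hxy, Fin.val_castLE, Fin.val_castLE]
      rw [Fin.lt_def, Fin.val_castLE, Fin.val_castLE] at hxy
      omega
  rw [cycleGraph_adj', pathGraph_adj, hsub, hsub]
  omega

def pathGraphEmbeddingCycleGraph {k n : ℕ} (h : k < n) : pathGraph k ↪g cycleGraph n :=
  ⟨Fin.castLEEmb h.le, cycleGraph_adj_castLE_iff h⟩

theorem exists_pathGraph_embedding_cycleGraph_notMem_range {k n : ℕ} [NeZero n] (h : k < n)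
    (v : Fin n) : ∃ f : pathGraph k ↪g cycleGraph n, v ∉ Set.range f := by
  refine ⟨(cycleGraphAddRight (v + 1)).toEmbedding.comp (pathGraphEmbeddingCycleGraph h), ?_⟩
  rintro ⟨a, ha⟩
  have hzero : a.castLE h.le + 1 = 0 := by
    change a.castLE h.le + (v + 1) = v at ha
    rwa [← add_assoc, add_comm _ v, add_assoc, add_eq_left] at ha
  simp only [Fin.ext_iff, Fin.val_add, Fin.val_castLE, Fin.val_one', Nat.add_mod_mod,
    Fin.val_zero] at hzero
  rw [Nat.mod_eq_of_lt (by omega)] at hzero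
  omega

theorem nonempty_pathGraph_embedding_cycleGraph_deleteEdges_singleton {k n : ℕ} (h : k < n)
    (e : Sym2 (Fin n)) : Nonempty (pathGraph k ↪g (cycleGraph n).deleteEdges {e}) := by
  have : NeZero n := ⟨by omega⟩
  obtain ⟨v, hv⟩ : ∃ v, v ∈ e := ⟨_, Sym2.out_fst_mem e⟩
  obtain ⟨f, hf⟩ := exists_pathGraph_embedding_cycleGraph_notMem_range h v
  refine ⟨f.toDeleteEdges fun a b hab => hf ?_⟩
  have hmem : v ∈ s(f a, f b) := by rwa [Set.mem_singleton_iff.1 hab]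
  rcases Sym2.mem_iff.1 hmem with ha | hb
  exacts [⟨a, ha.symm⟩, ⟨b, hb.symm⟩]

end SimpleGraph

theorem IsStarGraph.not_adj_of_adj_of_adj_s11 {V : Type*} {H : SimpleGraph V} (hH : IsStarGraph H)
    {a b c d : V} (hab : H.Adj a b) (hbc : H.Adj b c) (hac : a ≠ c) (had : a ≠ d) (hbd : b ≠ d) :
    ¬ H.Adj c d := by
  intro hcd
  obtain ⟨ctr, -, -, hleaf⟩ := hH (H.connectedComponentMk b)
  have hb : b ∈ (H.connectedComponentMk b).supp := rfl
  have ha : a ∈ (H.connectedComponentMk b).supp := ConnectedComponent.sound hab.reachable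
  have hc : c ∈ (H.connectedComponentMk b).supp := ConnectedComponent.sound hbc.reachable.symm
  have hd : d ∈ (H.connectedComponentMk b).supp :=
    ConnectedComponent.sound (hbc.reachable.trans hcd.reachable).symm
  by_cases hactr : a = ctr
  · subst hactr
    exact hleaf c hc d hd hac.symm had.symm hcd
  by_cases hbctr : b = ctr
  · subst hbctr
    exact hleaf c hc d hd hbc.ne' hbd.symm hcd
  · exact hleaf a ha b hb hactr hbctr hab

open scoped Pointwise in
theorem Finset.card_le_card_mul_card_of_forall_exists_add_mem {G : Type*} [AddGroup G]
    [Fintype G] [DecidableEq G] {S T : Finset G} (h : ∀ x, ∃ t ∈ T, x + t ∈ S) :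
    Fintype.card G ≤ #S * #T :=
  calc Fintype.card G = #(univ : Finset G) := card_univ.symm
    _ ≤ #(S - T) := card_le_card fun x _ =>
        let ⟨t, ht, hxt⟩ := h x
        mem_sub.2 ⟨x + t, hxt, t, ht, add_sub_cancel_right x t⟩
    _ ≤ #S * #T := card_sub_le

theorem Fin.one_add_one_eq_two {n : ℕ} [NeZero n] : (1 + 1 : Fin n) = 2 :=
  Fin.ext (Nat.add_mod _ _ _).symm

theorem Fin.two_add_one_eq_three {n : ℕ} [NeZero n] : (2 + 1 : Fin n) = 3 :=
  Fin.ext (Nat.add_mod _ _ _).symm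

theorem Fin.injective_sym2_mk_self_add_one {n : ℕ} [NeZero n] (hn : 3 ≤ n) :
    Function.Injective fun x : Fin n => s(x, x + 1) := by
  intro a b hab
  rcases Sym2.eq_iff.1 hab with ⟨h, -⟩ | ⟨h₁, h₂⟩
  · exact h
  · have : b + 2 = b := by rw [← Fin.one_add_one_eq_two, ← add_assoc, ← h₁, h₂]
    simp [Fin.ext_iff, Nat.mod_eq_of_lt (by omega : 2 < n)] at this

theorem exists_mem_of_isStarGraph_cycleGraph_deleteEdges {n : ℕ} [NeZero n] (hn : 4 ≤ n)
    {D : Set (Sym2 (Fin n))} (hD : IsStarGraph ((cycleGraph n).deleteEdges D)) (x : Fin n) :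
    ∃ t ∈ ({0, 1, 2} : Finset (Fin n)), s(x + t, x + t + 1) ∈ D := by
  by_contra! hkept
  have hadj : ∀ t ∈ ({0, 1, 2} : Finset (Fin n)),
      ((cycleGraph n).deleteEdges D).Adj (x + t) (x + t + 1) := fun t ht =>
    (deleteEdges_adj ..).2 ⟨cycleGraph_adj_add_one (by omega) _, hkept t ht⟩
  have h₀ := hadj 0 (by simp)
  have h₁ := hadj 1 (by simp)
  have h₂ := hadj 2 (by simp)
  simp only [add_zero, add_assoc, Fin.one_add_one_eq_two, Fin.two_add_one_eq_three] at h₀ h₁ h₂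
  refine hD.not_adj_of_adj_of_adj_s11 h₀ h₁ ?_ ?_ ?_ h₂ <;>
    simp [Fin.ext_iff, Nat.mod_eq_of_lt (by omega : 3 < n), Nat.mod_eq_of_lt (by omega : 2 < n),
      Nat.mod_eq_of_lt (by omega : 1 < n)]

theorem le_three_mul_ncard_of_isStarGraph_cycleGraph_deleteEdges {n : ℕ} (hn : 4 ≤ n)
    {D : Set (Sym2 (Fin n))} (hD : IsStarGraph ((cycleGraph n).deleteEdges D)) :
    n ≤ 3 * D.ncard := by
  have : NeZero n := ⟨by omega⟩
  classical
  set S := univ.filter fun x : Fin n => s(x, x + 1) ∈ D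
  have hcover : ∀ x, ∃ t ∈ ({0, 1, 2} : Finset (Fin n)), x + t ∈ S := fun x => by
    simpa [S, add_assoc, Fin.one_add_one_eq_two, Fin.two_add_one_eq_three] using
      exists_mem_of_isStarGraph_cycleGraph_deleteEdges hn hD x
  have hS : #S ≤ D.ncard := by
    rw [Set.ncard_eq_toFinset_card']
    refine card_le_card_of_injOn _ (fun x hx => ?_)
      ((Fin.injective_sym2_mk_self_add_one (by omega)).injOn)
    simpa [S] using hx
  calc n = Fintype.card (Fin n) := (Fintype.card_fin n).symm
    _ ≤ #S * #({0, 1, 2} : Finset (Fin n)) := card_le_card_mul_card_of_forall_exists_add_mem hcover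
    _ ≤ D.ncard * 3 := Nat.mul_le_mul hS card_le_three
    _ = 3 * D.ncard := Nat.mul_comm _ _

/-- Deleting any single edge from a cycle `C_n` with `n ≥ 5` leaves an induced
`P₄`; hence any set of deletions turning `C_n` into a starforest has size at
least `2`, and more generally at least `⌈n/3⌉`. -/
theorem cycle_deletion_lower_bound (n : ℕ) (hn : 5 ≤ n) :
    (∀ e ∈ (SimpleGraph.cycleGraph n).edgeSet,
      Nonempty (SimpleGraph.pathGraph 4 ↪g
        (SimpleGraph.cycleGraph n).deleteEdges {e})) ∧
    (∀ D : Set (Sym2 (Fin n)), D ⊆ (SimpleGraph.cycleGraph n).edgeSet →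
      IsStarGraph ((SimpleGraph.cycleGraph n).deleteEdges D) →
      2 ≤ D.ncard ∧ (n + 2) / 3 ≤ D.ncard) := by
  refine ⟨fun e _ => nonempty_pathGraph_embedding_cycleGraph_deleteEdges_singleton hn e,
    fun D _ hD => ?_⟩
  have := le_three_mul_ncard_of_isStarGraph_cycleGraph_deleteEdges (by omega) hD
  omega
end

section
/- A graph is a disjoint union of complete bipartite graphs (a bicluster graph) if and only if it contains no induced K_3 and no induced P_4. -/
open SimpleGraph

/-!
In a triangle-free graph an induced `P₄` is the same as a walk `a - b - c - d` whose distinct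
endpoints are not adjacent, so excluding `K₃` and `P₄` means that every walk of length three
between distinct vertices is closed by an edge. Iterating this, walks of odd length join
adjacent vertices and walks of even length non-adjacent ones; colouring each vertex by the
parity of a walk from a fixed vertex of its component therefore exhibits the graph as a
disjoint union of complete bipartite graphs. Conversely, adjacent vertices of such a graph
get different colours out of two, which excludes triangles and closes walks of length three.
-/

section

variable {V : Type*} {G : SimpleGraph V}

namespace SimpleGraph

theorem cliqueFree_iff_isEmpty_topEmbedding {n : ℕ} :
    G.CliqueFree n ↔ IsEmpty ((⊤ : SimpleGraph (Fin n)) ↪g G) := by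
  rw [← not_nonempty_iff, ← IsIndContained, top_isIndContained_iff_top_isContained,
    ← not_cliqueFree_iff_top_isContained, not_not]

def IsThreeWalkClosed (G : SimpleGraph V) : Prop :=
  ∀ ⦃a b c d : V⦄, G.Adj a b → G.Adj b c → G.Adj c d → a ≠ d → G.Adj a d

theorem IsThreeWalkClosed.isEmpty_pathGraph_four_embedding (hG : G.IsThreeWalkClosed) :
    IsEmpty (pathGraph 4 ↪g G) := by
  refine ⟨fun e => ?_⟩
  have hadj : ∀ i j : Fin 4, (i : ℕ) + 1 = j → G.Adj (e i) (e j) := fun i j h =>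
    e.map_adj_iff.mpr (pathGraph_adj.mpr (Or.inl h))
  have h03 : ¬ G.Adj (e 0) (e 3) := fun h => by
    simpa [pathGraph_adj] using e.map_adj_iff.mp h
  exact h03 (hG (hadj 0 1 rfl) (hadj 1 2 rfl) (hadj 2 3 rfl) (e.injective.ne (by decide)))

theorem isThreeWalkClosed_of_cliqueFree_three (hK : G.CliqueFree 3)
    (hP : IsEmpty (pathGraph 4 ↪g G)) : G.IsThreeWalkClosed := by
  classical
  intro a b c d hab hbc hcd had
  by_contra hnad
  have hac : ¬ G.Adj a c := fun h => hK {a, b, c} (is3Clique_triple_iff.mpr ⟨hab, h, hbc⟩)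
  have hbd : ¬ G.Adj b d := fun h => hK {b, c, d} (is3Clique_triple_iff.mpr ⟨hbc, h, hcd⟩)
  have hac' : a ≠ c := by rintro rfl; exact hnad hcd
  have hbd' : b ≠ d := by rintro rfl; exact hnad hab
  refine hP.false ⟨⟨![a, b, c, d], ?_⟩, ?_⟩
  · intro i j hij
    fin_cases i <;> fin_cases j <;> simp_all [hab.ne, hbc.ne, hcd.ne]
  · intro i j
    change G.Adj (![a, b, c, d] i) (![a, b, c, d] j) ↔ _
    fin_cases i <;> fin_cases j <;>
      simp [pathGraph_adj, hab, hbc, hcd, hab.symm, hbc.symm, hcd.symm, hac, hbd, hnad,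
        mt Adj.symm hac, mt Adj.symm hbd, mt Adj.symm hnad]

section TriangleFree

variable (hK : G.CliqueFree 3) (hC : G.IsThreeWalkClosed)
include hK hC

theorem Walk.adj_of_odd_length : ∀ {u v : V} (p : G.Walk u v), Odd p.length → G.Adj u v
  | _, _, .nil, hp => absurd hp (by simp)
  | _, _, .cons h .nil, _ => h
  | u, v, .cons (v := x) h (.cons (v := y) h' q), hp => by
    have hyv : G.Adj y v := q.adj_of_odd_length (by simpa [Nat.odd_add_one] using hp)
    obtain rfl | huv := eq_or_ne u v
    · classical
      exact absurd (is3Clique_triple_iff.mpr ⟨h, hyv.symm, h'⟩) (hK {u, x, y})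
    · exact hC h h' hyv huv

theorem Walk.adj_iff_odd_length {u v : V} (p : G.Walk u v) : G.Adj u v ↔ Odd p.length := by
  refine ⟨fun huv => ?_, p.adj_of_odd_length hK hC⟩
  by_contra hp
  have hodd : Odd (Walk.cons huv.symm p).length := by
    simpa [Nat.odd_add_one] using hp
  exact G.irrefl ((Walk.cons huv.symm p).adj_of_odd_length hK hC hodd)

end TriangleFree

end SimpleGraph

theorem IsTPartiteCluster.cliqueFree_succ {t : ℕ} (h : IsTPartiteCluster t G) :
    G.CliqueFree (t + 1) := by
  obtain ⟨f, hf⟩ := h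
  intro s hs
  have hinj : Set.InjOn f s := fun u hu v hv hfuv => by
    by_contra huv
    have hadj := hs.isClique hu hv huv
    exact (hf u v huv hadj.reachable).mp hadj hfuv
  simpa [hs.card_eq] using Finset.card_le_card_of_injOn f (fun _ _ => Finset.mem_univ _) hinj

theorem IsTPartiteCluster.isThreeWalkClosed (h : IsTPartiteCluster 2 G) :
    G.IsThreeWalkClosed := by
  obtain ⟨f, hf⟩ := h
  have hcol : ∀ ⦃u v⦄, G.Adj u v → f u ≠ f v := fun u v huv =>
    (hf u v huv.ne huv.reachable).mp huv
  intro a b c d hab hbc hcd had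
  refine (hf a d had (hab.reachable.trans (hbc.reachable.trans hcd.reachable))).mpr ?_
  have := hcol hab
  have := hcol hbc
  have := hcol hcd
  omega

theorem isTPartiteCluster_two_of_adj_iff_odd_length
    (h : ∀ ⦃u v : V⦄ (p : G.Walk u v), G.Adj u v ↔ Odd p.length) : IsTPartiteCluster 2 G := by
  let root (v : V) : G.Walk (G.connectedComponentMk v).out v :=
    (ConnectedComponent.exact (G.connectedComponentMk v).out_eq).some
  refine ⟨fun v => if Even (root v).length then 0 else 1, fun u v _ huv => ?_⟩
  have hroot : (G.connectedComponentMk v).out = (G.connectedComponentMk u).out := by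
    rw [ConnectedComponent.sound huv]
  rw [h ((root u).reverse.append ((root v).copy hroot rfl))]
  simp only [Walk.length_append, Walk.length_reverse, Walk.length_copy, Nat.odd_add]
  split_ifs <;> simp_all [← Nat.not_even_iff_odd]

end

/-- A graph is a disjoint union of complete bipartite graphs (a bicluster graph)
iff it contains no induced `K₃` and no induced `P₄`. -/
theorem bicluster_iff_forbidden {V : Type*} (G : SimpleGraph V) :
    IsTPartiteCluster 2 G ↔
      IsEmpty ((⊤ : SimpleGraph (Fin 3)) ↪g G) ∧
      IsEmpty (SimpleGraph.pathGraph 4 ↪g G) := by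
  rw [← cliqueFree_iff_isEmpty_topEmbedding]
  refine ⟨fun h => ⟨h.cliqueFree_succ, h.isThreeWalkClosed.isEmpty_pathGraph_four_embedding⟩, ?_⟩
  rintro ⟨hK, hP⟩
  exact isTPartiteCluster_two_of_adj_iff_odd_length
    fun _ _ p => p.adj_iff_odd_length hK (isThreeWalkClosed_of_cliqueFree_three hK hP)
end

section
/- Let G be a graph, k a non-negative integer, and X a set of pairwise non-adjacent vertices with identical nonempty neighborhoods (a non-isolate false twin class) with |X| ≥ 2k+2. Let G' be obtained from G by deleting all but 2k+1 vertices of X. Then G has an edit set F of size at most k making G △ F a disjoint union of exactly p complete t-partite graphs if and only if G' does. -/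
open SimpleGraph

/-- `G` has an edit set of size at most `k` turning it into a disjoint union of
exactly `p` complete `t`-partite graphs. -/
def HasClusterEdit {V : Type*} (G : SimpleGraph V) (k p t : ℕ) : Prop :=
  ∃ F : Set (Sym2 V), (∀ e ∈ F, ¬ e.IsDiag) ∧ F.ncard ≤ k ∧
    IsTPartiteCluster t (editedGraph G F) ∧
    Nat.card (editedGraph G F).ConnectedComponent = p

namespace TwinRuleAux

variable {V : Type*}

lemma edited_adj (G : SimpleGraph V) (F : Set (Sym2 V)) (u v : V) :
    (editedGraph G F).Adj u v ↔ s(u, v) ∈ symmDiff G.edgeSet F ∧ u ≠ v :=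
  SimpleGraph.fromEdgeSet_adj _

lemma untouched_nbhd (G : SimpleGraph V) (F : Set (Sym2 V)) (x : V)
    (hx : ∀ e ∈ F, x ∉ e) : (editedGraph G F).neighborSet x = G.neighborSet x := by
  ext w
  have hF : s(x, w) ∉ F := fun h => hx _ h (Sym2.mem_mk_left x w)
  simp only [SimpleGraph.mem_neighborSet, edited_adj, Set.mem_symmDiff,
    SimpleGraph.mem_edgeSet]
  constructor
  · rintro ⟨⟨h, -⟩ | ⟨h, -⟩, -⟩
    · exact h
    · exact absurd h hF
  · exact fun h => ⟨Or.inl ⟨h, hF⟩, G.ne_of_adj h⟩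

lemma induce_edited (G : SimpleGraph V) (S : Set V) (F : Set (Sym2 V)) :
    (editedGraph G F).induce S =
      editedGraph (G.induce S) {e : Sym2 S | e.map Subtype.val ∈ F} := by
  ext a b
  show (editedGraph G F).Adj ↑a ↑b ↔ _
  rw [edited_adj, edited_adj, Set.mem_symmDiff, Set.mem_symmDiff]
  have h1 : s(a, b) ∈ (G.induce S).edgeSet ↔ s((a : V), (b : V)) ∈ G.edgeSet := Iff.rfl
  have h2 : s(a, b) ∈ {e : Sym2 S | e.map Subtype.val ∈ F} ↔ s((a : V), (b : V)) ∈ F := by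
    rw [Set.mem_setOf_eq, Sym2.map_pair_eq]
  have h3 : (a : V) ≠ (b : V) ↔ a ≠ b := Subtype.coe_ne_coe
  rw [h1, h2, h3]

lemma tpartite_of_iso {W : Type*} {H : SimpleGraph V} {H' : SimpleGraph W}
    (φ : H ≃g H') {t : ℕ} (h : IsTPartiteCluster t H) : IsTPartiteCluster t H' := by
  obtain ⟨f, hf⟩ := h
  refine ⟨fun w => f (φ.symm w), fun u v huv hr => ?_⟩
  have h2 := hf (φ.symm u) (φ.symm v) (fun h => huv (φ.symm.injective h))
    (hr.map φ.symm.toHom)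
  rwa [φ.symm.map_adj_iff] at h2

lemma isDiag_map_iff {α β : Type*} {f : α → β} (hf : Function.Injective f) (e : Sym2 α) :
    (e.map f).IsDiag ↔ e.IsDiag := by
  induction e using Sym2.ind with
  | _ a b => simp [Sym2.map_pair_eq, Sym2.mk_isDiag_iff, hf.eq_iff]

lemma image_restrict (S : Set V) (F : Set (Sym2 V))
    (h : ∀ e ∈ F, ∀ v ∈ e, v ∈ S) :
    Sym2.map Subtype.val '' {e : Sym2 S | e.map Subtype.val ∈ F} = F := by
  ext e
  constructor
  · rintro ⟨e', he', rfl⟩; exact he'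
  · intro he
    revert he
    induction e using Sym2.ind with
    | _ a b =>
      intro he
      exact ⟨s(⟨a, h _ he _ (Sym2.mem_mk_left a b)⟩, ⟨b, h _ he _ (Sym2.mem_mk_right a b)⟩),
        he, rfl⟩

lemma sym2_filter_card_le [Fintype V] [DecidableEq V] (e : Sym2 V) :
    (Finset.univ.filter (· ∈ e)).card ≤ 2 := by
  induction e using Sym2.ind with
  | _ a b =>
    have hsub : (Finset.univ.filter (· ∈ s(a, b))) ⊆ {a, b} := by
      intro v hv
      simp only [Finset.mem_filter, Sym2.mem_iff] at hv
      simp [Finset.mem_insert, hv.2]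
    calc (Finset.univ.filter (· ∈ s(a, b))).card ≤ ({a, b} : Finset V).card :=
          Finset.card_le_card hsub
      _ ≤ 2 := (Finset.card_insert_le a {b}).trans (by simp)

/-- The key structural lemma: if every vertex of `D` is a false twin of `y₀ ∉ D`
(in `H`), with nonempty common neighbourhood, then deleting `D` changes neither
being a `t`-partite cluster nor the number of connected components. -/
lemma key [DecidableEq V] (H : SimpleGraph V) (D : Set V) (y₀ : V) (hy₀ : y₀ ∉ D)
    (hnb : ∀ x ∈ D, H.neighborSet x = H.neighborSet y₀)
    (hne : (H.neighborSet y₀).Nonempty) :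
    (∀ t, IsTPartiteCluster t H → IsTPartiteCluster t (H.induce Dᶜ)) ∧
    (∀ t, IsTPartiteCluster t (H.induce Dᶜ) → IsTPartiteCluster t H) ∧
    Nat.card (H.induce Dᶜ).ConnectedComponent = Nat.card H.ConnectedComponent := by
  classical
  have hDadj : ∀ x ∈ D, ∀ w, H.Adj x w → H.Adj y₀ w ∧ w ∉ D := by
    intro x hx w hadj
    have hw : w ∈ H.neighborSet y₀ := by rw [← hnb x hx]; exact hadj
    refine ⟨hw, fun hwD => ?_⟩
    have h2 : y₀ ∈ H.neighborSet w := H.adj_symm hw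
    rw [hnb w hwD] at h2
    exact H.irrefl h2
  set r : V → ↥(Dᶜ) := fun v => if h : v ∈ D then ⟨y₀, hy₀⟩ else ⟨v, h⟩ with hrdef
  have hrD : ∀ v (h : v ∈ D), r v = ⟨y₀, hy₀⟩ := fun v h => dif_pos h
  have hrn : ∀ v (h : v ∉ D), r v = ⟨v, h⟩ := fun v h => dif_neg h
  have hhom : ∀ u v, H.Adj u v → (H.induce Dᶜ).Adj (r u) (r v) := by
    intro u v hadj
    by_cases hu : u ∈ D
    · have h := hDadj u hu v hadj
      rw [hrD u hu, hrn v h.2]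
      exact h.1
    · by_cases hv : v ∈ D
      · have h := hDadj v hv u (H.adj_symm hadj)
        rw [hrn u h.2, hrD v hv]
        exact H.adj_symm h.1
      · rw [hrn u hu, hrn v hv]
        exact hadj
  let fr : H →g H.induce Dᶜ := ⟨r, fun {a b} h => hhom a b h⟩
  have hfr : ∀ v, fr v = r v := fun v => rfl
  let ι : H.induce Dᶜ →g H := (SimpleGraph.Embedding.induce Dᶜ).toHom
  have hι : ∀ v : ↥(Dᶜ), ι v = ↑v := fun v => rfl
  have hreach : ∀ v : V, H.Reachable v ↑(r v) := by
    intro v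
    by_cases hv : v ∈ D
    · rw [hrD v hv]
      obtain ⟨w, hw⟩ := hne
      have hvw : H.Adj v w := by
        have h : w ∈ H.neighborSet v := by rw [hnb v hv]; exact hw
        exact h
      exact hvw.reachable.trans (H.adj_symm hw).reachable
    · rw [hrn v hv]
  have compEquiv : (H.induce Dᶜ).ConnectedComponent ≃ H.ConnectedComponent := by
    refine ⟨ConnectedComponent.map ι, ConnectedComponent.map fr, ?_, ?_⟩
    · refine ConnectedComponent.ind fun v => ?_
      simp only [ConnectedComponent.map_mk]
      have h : fr (ι v) = v := by
        obtain ⟨v, hv⟩ := v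
        exact hrn v hv
      rw [h]
    · refine ConnectedComponent.ind fun v => ?_
      simp only [ConnectedComponent.map_mk]
      exact ConnectedComponent.sound (hreach v).symm
  refine ⟨?_, ?_, Nat.card_congr compEquiv⟩
  · rintro t ⟨f, hf⟩
    refine ⟨fun v => f ↑v, fun u v huv hr => ?_⟩
    exact hf ↑u ↑v (fun h => huv (Subtype.ext h)) (hr.map ι)
  · rintro t ⟨f, hf⟩
    refine ⟨fun v => f (r v), fun u v huv hr => ?_⟩
    show H.Adj u v ↔ f (r u) ≠ f (r v)
    by_cases hu : u ∈ D
    · by_cases hv : v ∈ D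
      · have h1 : ¬ H.Adj u v := fun h => (hDadj u hu v h).2 hv
        rw [hrD u hu, hrD v hv]
        simp [h1]
      · by_cases hvy : v = y₀
        · subst hvy
          have h1 : ¬ H.Adj u v := fun h => H.irrefl (hDadj u hu v h).1
          rw [hrD u hu, hrn v hv]
          simp [h1]
        · have hadj : H.Adj u v ↔ H.Adj y₀ v := by
            constructor
            · exact fun h => (hDadj u hu v h).1
            · intro h
              have h2 : v ∈ H.neighborSet u := by rw [hnb u hu]; exact h
              exact h2
          have hne2 : (⟨y₀, hy₀⟩ : ↥(Dᶜ)) ≠ ⟨v, hv⟩ :=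
            fun h => hvy (congrArg Subtype.val h).symm
          have hre : (H.induce Dᶜ).Reachable ⟨y₀, hy₀⟩ ⟨v, hv⟩ := by
            have h := hr.map fr
            rwa [hfr, hfr, hrD u hu, hrn v hv] at h
          have h := hf _ _ hne2 hre
          rw [hrD u hu, hrn v hv, hadj]
          exact h
    · by_cases hv : v ∈ D
      · by_cases huy : u = y₀
        · subst huy
          have h1 : ¬ H.Adj u v := fun h => H.irrefl (hDadj v hv u (H.adj_symm h)).1
          rw [hrn u hu, hrD v hv]
          simp [h1]
        · have hadj : H.Adj u v ↔ H.Adj u y₀ := by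
            constructor
            · exact fun h => H.adj_symm (hDadj v hv u (H.adj_symm h)).1
            · intro h
              have h2 : u ∈ H.neighborSet v := by
                rw [hnb v hv]; exact H.adj_symm h
              exact H.adj_symm h2
          have hne2 : (⟨u, hu⟩ : ↥(Dᶜ)) ≠ ⟨y₀, hy₀⟩ :=
            fun h => huy (congrArg Subtype.val h)
          have hre : (H.induce Dᶜ).Reachable ⟨u, hu⟩ ⟨y₀, hy₀⟩ := by
            have h := hr.map fr
            rwa [hfr, hfr, hrn u hu, hrD v hv] at h
          have h := hf _ _ hne2 hre
          rw [hrn u hu, hrD v hv, hadj]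
          exact h
      · rw [hrn u hu, hrn v hv]
        have hre : (H.induce Dᶜ).Reachable ⟨u, hu⟩ ⟨v, hv⟩ := by
          have h := hr.map fr
          rwa [hfr, hfr, hrn u hu, hrn v hv] at h
        exact hf _ _ (fun h => huv (congrArg Subtype.val h)) hre

end TwinRuleAux

open TwinRuleAux in
/-- Soundness of the twin reduction rule: if `X` is a non-isolate false twin class
with at least `2k+2` vertices, deleting all but `2k+1` of its vertices (keeping
`Y ⊆ X` of size `2k+1`) does not change whether an edit set of size at most `k` to
a disjoint union of exactly `p` complete `t`-partite graphs exists. -/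
theorem twin_rule_sound {V : Type*} [Fintype V] [DecidableEq V] (G : SimpleGraph V)
    (k p t : ℕ) (X : Finset V) (hX : 2 * k + 2 ≤ X.card)
    (hind : ∀ u ∈ X, ∀ w ∈ X, ¬ G.Adj u w)
    (htwin : ∀ u ∈ X, ∀ w ∈ X, G.neighborSet u = G.neighborSet w)
    (hne : ∀ u ∈ X, (G.neighborSet u).Nonempty)
    (Y : Finset V) (hYX : Y ⊆ X) (hY : Y.card = 2 * k + 1) :
    HasClusterEdit G k p t ↔
      HasClusterEdit (G.induce ((↑(X \ Y) : Set V)ᶜ)) k p t := by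
  classical
  have touched_le : ∀ (F : Set (Sym2 V)), F.ncard ≤ k →
      ((Set.toFinite F).toFinset.biUnion (fun e => Finset.univ.filter (· ∈ e))).card ≤ 2 * k := by
    intro F hF
    calc ((Set.toFinite F).toFinset.biUnion (fun e => Finset.univ.filter (· ∈ e))).card
        ≤ ∑ e ∈ (Set.toFinite F).toFinset, (Finset.univ.filter (· ∈ e)).card :=
          Finset.card_biUnion_le
      _ ≤ ∑ _e ∈ (Set.toFinite F).toFinset, 2 :=
          Finset.sum_le_sum (fun e _ => sym2_filter_card_le e)
      _ = (Set.toFinite F).toFinset.card * 2 := by rw [Finset.sum_const, smul_eq_mul]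
      _ ≤ k * 2 := Nat.mul_le_mul_right 2
          (by rw [← Set.ncard_eq_toFinset_card]; exact hF)
      _ = 2 * k := Nat.mul_comm k 2
  constructor
  · -- forward direction
    rintro ⟨F, hd, hc, hT, hp⟩
    set tc : Finset V :=
      (Set.toFinite F).toFinset.biUnion (fun e => Finset.univ.filter (· ∈ e)) with htcdef
    have htc_mem : ∀ v, v ∈ tc ↔ ∃ e ∈ F, v ∈ e := by
      intro v
      simp only [htcdef, Finset.mem_biUnion, Set.Finite.mem_toFinset, Finset.mem_filter,
        Finset.mem_univ, true_and]
    have htc_card : tc.card ≤ 2 * k := touched_le F hc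
    set Tt : Finset V := (X \ Y) ∩ tc with hTtdef
    set Yu : Finset V := Y \ tc with hYudef
    have hdisj : Disjoint Tt (Y ∩ tc) := by
      refine Finset.disjoint_left.mpr ?_
      intro a ha hb
      exact (Finset.mem_sdiff.mp (Finset.mem_inter.mp ha).1).2 (Finset.mem_inter.mp hb).1
    have hsum : Tt.card + (Y ∩ tc).card ≤ 2 * k := by
      rw [← Finset.card_union_of_disjoint hdisj]
      refine le_trans (Finset.card_le_card ?_) htc_card
      exact Finset.union_subset Finset.inter_subset_right Finset.inter_subset_right
    have hYu_card : Yu.card = Y.card - (Y ∩ tc).card := by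
      rw [hYudef, ← Finset.sdiff_inter_self_left Y tc]
      exact Finset.card_sdiff_of_subset Finset.inter_subset_left
    have hcle : (Y ∩ tc).card ≤ Y.card := Finset.card_le_card Finset.inter_subset_left
    have hTle : Tt.card + 1 ≤ Yu.card := by omega
    obtain ⟨S, hSsub, hScard⟩ := Finset.exists_subset_card_eq (show Tt.card ≤ Yu.card by omega)
    have hy0ex : (Yu \ S).Nonempty := by
      rw [← Finset.card_pos, Finset.card_sdiff_of_subset hSsub]
      omega
    obtain ⟨y₀, hy₀mem⟩ := hy0ex
    have hy₀Yu : y₀ ∈ Yu := (Finset.mem_sdiff.mp hy₀mem).1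
    have hy₀S : y₀ ∉ S := (Finset.mem_sdiff.mp hy₀mem).2
    have hy₀Y : y₀ ∈ Y := (Finset.mem_sdiff.mp hy₀Yu).1
    have hy₀tc : y₀ ∉ tc := (Finset.mem_sdiff.mp hy₀Yu).2
    set eqv : {x // x ∈ Tt} ≃ {x // x ∈ S} := Finset.equivOfCardEq hScard.symm with heqv
    set σ : V → V := fun v =>
      if h : v ∈ Tt then ↑(eqv ⟨v, h⟩) else if h : v ∈ S then ↑(eqv.symm ⟨v, h⟩) else v
      with hσdef
    have hTX : ∀ v ∈ Tt, v ∈ X \ Y := fun v hv => (Finset.mem_inter.mp hv).1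
    have hSY : ∀ v ∈ S, v ∈ Y ∧ v ∉ tc := fun v hv => Finset.mem_sdiff.mp (hSsub hv)
    have hST : ∀ v ∈ S, v ∉ Tt := by
      intro v hv hvT
      exact (Finset.mem_sdiff.mp (hTX v hvT)).2 (hSY v hv).1
    have hσT : ∀ v (h : v ∈ Tt), σ v = ↑(eqv ⟨v, h⟩) := fun v h => dif_pos h
    have hσS : ∀ v (h : v ∈ S), σ v = ↑(eqv.symm ⟨v, h⟩) := by
      intro v h
      rw [hσdef]
      dsimp only
      rw [dif_neg (hST v h), dif_pos h]
    have hσo : ∀ v, v ∉ Tt → v ∉ S → σ v = v := by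
      intro v h1 h2
      rw [hσdef]
      dsimp only
      rw [dif_neg h1, dif_neg h2]
    have hinv : Function.Involutive σ := by
      intro v
      by_cases h : v ∈ Tt
      · rw [hσT v h, hσS _ (eqv ⟨v, h⟩).2]
        have he : (⟨↑(eqv ⟨v, h⟩), (eqv ⟨v, h⟩).2⟩ : {x // x ∈ S}) = eqv ⟨v, h⟩ := rfl
        rw [he, Equiv.symm_apply_apply]
      · by_cases h2 : v ∈ S
        · rw [hσS v h2, hσT _ (eqv.symm ⟨v, h2⟩).2]
          have he : (⟨↑(eqv.symm ⟨v, h2⟩), (eqv.symm ⟨v, h2⟩).2⟩ : {x // x ∈ Tt}) =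
              eqv.symm ⟨v, h2⟩ := rfl
          rw [he, Equiv.apply_symm_apply]
        · rw [hσo v h h2, hσo v h h2]
    have σinj : Function.Injective σ := hinv.injective
    have hσX : ∀ v, σ v = v ∨ (v ∈ X ∧ σ v ∈ X) := by
      intro v
      by_cases h : v ∈ Tt
      · right
        refine ⟨(Finset.mem_sdiff.mp (hTX v h)).1, ?_⟩
        rw [hσT v h]
        exact hYX (hSY _ (eqv ⟨v, h⟩).2).1
      · by_cases h2 : v ∈ S
        · right
          refine ⟨hYX (hSY v h2).1, ?_⟩
          rw [hσS v h2]
          exact (Finset.mem_sdiff.mp (hTX _ (eqv.symm ⟨v, h2⟩).2)).1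
        · left
          exact hσo v h h2
    have hσnb : ∀ v, G.neighborSet (σ v) = G.neighborSet v := by
      intro v
      rcases hσX v with h | ⟨h1, h2⟩
      · rw [h]
      · exact htwin (σ v) h2 v h1
    have hσadj : ∀ u v, G.Adj (σ u) (σ v) ↔ G.Adj u v := by
      intro u v
      have h1 : ∀ a b : V, G.Adj (σ a) b ↔ G.Adj a b := by
        intro a b
        show b ∈ G.neighborSet (σ a) ↔ b ∈ G.neighborSet a
        rw [hσnb a]
      calc G.Adj (σ u) (σ v) ↔ G.Adj u (σ v) := h1 u (σ v)
        _ ↔ G.Adj (σ v) u := G.adj_comm _ _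
        _ ↔ G.Adj v u := h1 v u
        _ ↔ G.Adj u v := G.adj_comm _ _
    set F₂ : Set (Sym2 V) := Sym2.map σ '' F with hF₂def
    have hmapinj := Sym2.map.injective σinj
    have φ : editedGraph G F ≃g editedGraph G F₂ := by
      refine ⟨Function.Involutive.toPerm σ hinv, @fun a b => ?_⟩
      show (editedGraph G F₂).Adj (σ a) (σ b) ↔ (editedGraph G F).Adj a b
      rw [edited_adj, edited_adj, Set.mem_symmDiff, Set.mem_symmDiff]
      have e1 : s(σ a, σ b) ∈ G.edgeSet ↔ s(a, b) ∈ G.edgeSet := hσadj a b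
      have e2 : s(σ a, σ b) ∈ F₂ ↔ s(a, b) ∈ F := by
        have hm : s(σ a, σ b) = Sym2.map σ s(a, b) := rfl
        rw [hm, hF₂def]
        exact hmapinj.mem_set_image
      have e3 : σ a ≠ σ b ↔ a ≠ b := σinj.ne_iff
      rw [e1, e2, e3]
    have hT₂ : IsTPartiteCluster t (editedGraph G F₂) := tpartite_of_iso φ hT
    have hp₂ : Nat.card (editedGraph G F₂).ConnectedComponent = p := by
      rw [← hp]
      exact Nat.card_congr φ.connectedComponentEquiv.symm
    have hF₂d : ∀ e ∈ F₂, ¬ e.IsDiag := by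
      rintro e ⟨e₀, he₀, rfl⟩ hdiag
      exact hd e₀ he₀ ((isDiag_map_iff σinj e₀).mp hdiag)
    have hF₂c : F₂.ncard ≤ k := by
      rw [hF₂def, Set.ncard_image_of_injective _ hmapinj]
      exact hc
    have hσV : ∀ w, (∃ e ∈ F, w ∈ e) → σ w ∈ ((↑(X \ Y) : Set V)ᶜ) ∧ σ w ≠ y₀ := by
      intro w hw
      have hwt : w ∈ tc := (htc_mem w).mpr hw
      by_cases h : w ∈ Tt
      · have hσw : σ w ∈ S := by
          rw [hσT w h]
          exact (eqv ⟨w, h⟩).2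
        constructor
        · intro hc2
          exact (Finset.mem_sdiff.mp (by exact_mod_cast hc2)).2 (hSY _ hσw).1
        · intro hc2
          rw [hc2] at hσw
          exact hy₀S hσw
      · have hwS : w ∉ S := fun hS => (hSY w hS).2 hwt
        rw [hσo w h hwS]
        constructor
        · intro hc2
          have hwXY : w ∈ X \ Y := by exact_mod_cast hc2
          exact h (Finset.mem_inter.mpr ⟨hwXY, hwt⟩)
        · intro hc2
          rw [hc2] at hwt
          exact hy₀tc hwt
    have hF₂V : ∀ e ∈ F₂, ∀ v ∈ e, v ∈ ((↑(X \ Y) : Set V)ᶜ) := by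
      rintro e ⟨e₀, he₀, rfl⟩ v hv
      rw [Sym2.mem_map] at hv
      obtain ⟨w, hw, rfl⟩ := hv
      exact (hσV w ⟨e₀, he₀, hw⟩).1
    have hy₀un : ∀ e ∈ F₂, y₀ ∉ e := by
      rintro e ⟨e₀, he₀, rfl⟩ hy
      rw [Sym2.mem_map] at hy
      obtain ⟨w, hw, hwy⟩ := hy
      exact (hσV w ⟨e₀, he₀, hw⟩).2 hwy
    have hnb : ∀ x ∈ (↑(X \ Y) : Set V),
        (editedGraph G F₂).neighborSet x = (editedGraph G F₂).neighborSet y₀ := by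
      intro x hx
      have hxXY : x ∈ X \ Y := by exact_mod_cast hx
      have hxun : ∀ e ∈ F₂, x ∉ e := fun e he hxe => (hF₂V e he x hxe) hx
      rw [untouched_nbhd G F₂ x hxun, untouched_nbhd G F₂ y₀ hy₀un]
      exact htwin x (Finset.mem_sdiff.mp hxXY).1 y₀ (hYX hy₀Y)
    have hy₀D : y₀ ∉ (↑(X \ Y) : Set V) := fun h =>
      (Finset.mem_sdiff.mp (by exact_mod_cast h)).2 hy₀Y
    have hneH : ((editedGraph G F₂).neighborSet y₀).Nonempty := by
      rw [untouched_nbhd G F₂ y₀ hy₀un]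
      exact hne y₀ (hYX hy₀Y)
    have hkey := key (editedGraph G F₂) (↑(X \ Y)) y₀ hy₀D hnb hneH
    set F' : Set (Sym2 ((↑(X \ Y) : Set V)ᶜ : Set V)) := {e | e.map Subtype.val ∈ F₂} with hF'def
    have vinj : Function.Injective
        (Subtype.val : ((↑(X \ Y) : Set V)ᶜ : Set V) → V) := Subtype.val_injective
    have himg : Sym2.map Subtype.val '' F' = F₂ := image_restrict _ F₂ hF₂V
    have hstep : (editedGraph G F₂).induce ((↑(X \ Y) : Set V)ᶜ) =
        editedGraph (G.induce ((↑(X \ Y) : Set V)ᶜ)) F' := by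
      rw [hF'def]
      exact induce_edited G _ F₂
    refine ⟨F', ?_, ?_, ?_, ?_⟩
    · intro e he hdiag
      exact hF₂d _ he ((isDiag_map_iff vinj e).mpr hdiag)
    · have h2 : F'.ncard = F₂.ncard := by
        rw [← himg]
        exact (Set.ncard_image_of_injective _ (Sym2.map.injective vinj)).symm
      rw [h2]
      exact hF₂c
    · rw [← hstep]
      exact hkey.1 t hT₂
    · rw [← hstep, hkey.2.2]
      exact hp₂
  · -- reverse direction
    rintro ⟨F', hd', hc', hT', hp'⟩
    set F : Set (Sym2 V) := Sym2.map Subtype.val '' F' with hFdef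
    have vinj : Function.Injective
        (Subtype.val : ((↑(X \ Y) : Set V)ᶜ : Set V) → V) := Subtype.val_injective
    have hFd : ∀ e ∈ F, ¬ e.IsDiag := by
      rintro e ⟨e', he', rfl⟩ hdiag
      exact hd' e' he' ((isDiag_map_iff vinj e').mp hdiag)
    have hFc : F.ncard ≤ k := by
      rw [hFdef, Set.ncard_image_of_injective _ (Sym2.map.injective vinj)]
      exact hc'
    have hFV : ∀ e ∈ F, ∀ v ∈ e, v ∈ ((↑(X \ Y) : Set V)ᶜ) := by
      rintro e ⟨e', he', rfl⟩ v hv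
      rw [Sym2.mem_map] at hv
      obtain ⟨a, _, rfl⟩ := hv
      exact a.2
    obtain ⟨y₀, hy₀Y, hy₀un⟩ : ∃ y₀ ∈ Y, ∀ e ∈ F, y₀ ∉ e := by
      set tc : Finset V :=
        (Set.toFinite F).toFinset.biUnion (fun e => Finset.univ.filter (· ∈ e)) with htcdef
      have htc_card : tc.card ≤ 2 * k := touched_le F hFc
      have hex : ∃ y ∈ Y, y ∉ tc := by
        by_contra hcon
        push_neg at hcon
        have hsub : Y ⊆ tc := hcon
        have := Finset.card_le_card hsub
        omega
      obtain ⟨y₀, hy₀Y, hy₀tc⟩ := hex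
      refine ⟨y₀, hy₀Y, fun e he hy => hy₀tc ?_⟩
      rw [htcdef]
      simp only [Finset.mem_biUnion, Set.Finite.mem_toFinset, Finset.mem_filter,
        Finset.mem_univ, true_and]
      exact ⟨e, he, hy⟩
    have hnb : ∀ x ∈ (↑(X \ Y) : Set V),
        (editedGraph G F).neighborSet x = (editedGraph G F).neighborSet y₀ := by
      intro x hx
      have hxXY : x ∈ X \ Y := by exact_mod_cast hx
      have hxun : ∀ e ∈ F, x ∉ e := fun e he hxe => (hFV e he x hxe) hx
      rw [untouched_nbhd G F x hxun, untouched_nbhd G F y₀ hy₀un]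
      exact htwin x (Finset.mem_sdiff.mp hxXY).1 y₀ (hYX hy₀Y)
    have hy₀D : y₀ ∉ (↑(X \ Y) : Set V) := fun h =>
      (Finset.mem_sdiff.mp (by exact_mod_cast h)).2 hy₀Y
    have hneH : ((editedGraph G F).neighborSet y₀).Nonempty := by
      rw [untouched_nbhd G F y₀ hy₀un]
      exact hne y₀ (hYX hy₀Y)
    have hkey := key (editedGraph G F) (↑(X \ Y)) y₀ hy₀D hnb hneH
    have hsets : {e : Sym2 ((↑(X \ Y) : Set V)ᶜ : Set V) | e.map Subtype.val ∈ F} = F' := by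
      ext e
      rw [Set.mem_setOf_eq, hFdef]
      exact (Sym2.map.injective vinj).mem_set_image
    have hstep : (editedGraph G F).induce ((↑(X \ Y) : Set V)ᶜ) =
        editedGraph (G.induce ((↑(X \ Y) : Set V)ᶜ)) F' := by
      rw [induce_edited, hsets]
    refine ⟨F, hFd, hFc, ?_, ?_⟩
    · refine hkey.2.1 t ?_
      rw [hstep]
      exact hT'
    · rw [← hkey.2.2, hstep]
      exact hp'
end

section
/- Let (G, k) be an instance such that G has an edit set F with |F| ≤ k making G △ F a disjoint union of exactly p complete t-partite graphs, and suppose every non-isolate false twin class of G has at most 2k+1 vertices. Then G has at most pt(2k+1) + 2k vertices. -/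
open SimpleGraph

/-- Kernel size bound: if `(G,k)` is a yes-instance of `t`-partite `p`-cluster
editing and every non-isolate false twin class of `G` has at most `2k+1` vertices,
then `G` has at most `pt(2k+1) + 2k` vertices. -/
theorem kernel_size_bound {V : Type*} [Fintype V] (G : SimpleGraph V) (k p t : ℕ)
    (hsol : HasClusterEdit G k p t)
    (htwin : ∀ v : V, (G.neighborSet v).Nonempty →
      {u : V | G.neighborSet u = G.neighborSet v}.ncard ≤ 2 * k + 1) :
    Fintype.card V ≤ p * t * (2 * k + 1) + 2 * k := by
  classical
  obtain ⟨F, hFdiag, hFcard, ⟨f, hf⟩, hp⟩ := hsol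
  set H := editedGraph G F with hH
  -- adjacency in H
  have hHadj : ∀ u v : V, H.Adj u v ↔ s(u, v) ∈ symmDiff G.edgeSet F ∧ u ≠ v := by
    intro u v
    simp [hH, editedGraph, SimpleGraph.fromEdgeSet_adj]
  -- F is finite
  have hFfin : F.Finite := Set.toFinite F
  set Ffin : Finset (Sym2 V) := hFfin.toFinset with hFf
  -- the set of vertices touched by F
  set Tfin : Finset V := Ffin.biUnion (fun e => Finset.univ.filter (· ∈ e)) with hT
  have hTcard : Tfin.card ≤ 2 * k := by
    calc Tfin.card ≤ ∑ e ∈ Ffin, (Finset.univ.filter (· ∈ e)).card :=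
          Finset.card_biUnion_le
      _ ≤ ∑ _e ∈ Ffin, 2 := by
          apply Finset.sum_le_sum
          intro e _
          induction e with
          | h a b =>
            have : (Finset.univ.filter (· ∈ s(a, b))) ⊆ {a, b} := by
              intro x hx
              simp only [Finset.mem_filter, Sym2.mem_iff] at hx
              simp [hx.2]
            calc (Finset.univ.filter (· ∈ s(a, b))).card ≤ ({a, b} : Finset V).card :=
                  Finset.card_le_card this
              _ ≤ 2 := Finset.card_insert_le _ _ |>.trans (by simp)
      _ = 2 * Ffin.card := by rw [Finset.sum_const, smul_eq_mul, mul_comm]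
      _ ≤ 2 * k := by
          have : Ffin.card = F.ncard := (Set.ncard_eq_toFinset_card F hFfin).symm
          omega
  -- vertices not touched by F have the same neighborhoods in G and H
  have hsame : ∀ v : V, (∀ e ∈ F, v ∉ e) → ∀ w : V, H.Adj v w ↔ G.Adj v w := by
    intro v hv w
    have hnF : s(v, w) ∉ F := fun h => hv _ h (by simp)
    rw [hHadj]
    constructor
    · rintro ⟨hmem, hne⟩
      rcases hmem with ⟨hG, -⟩ | ⟨hF, -⟩
      · exact hG
      · exact absurd hF hnF
    · intro hG
      exact ⟨Or.inl ⟨hG, hnF⟩, hG.ne⟩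
  have hsameNb : ∀ v : V, (∀ e ∈ F, v ∉ e) → H.neighborSet v = G.neighborSet v := by
    intro v hv
    ext w
    exact hsame v hv w
  -- the untouched vertices
  set Tc : Finset V := Finset.univ.filter (fun v => ∀ e ∈ F, v ∉ e) with hTc
  -- connected components form a fintype
  have : Finite H.ConnectedComponent := Quot.finite _
  have hCC : Fintype H.ConnectedComponent := Fintype.ofFinite _
  -- the fiber map
  set g : V → H.ConnectedComponent × Fin t :=
    fun v => (H.connectedComponentMk v, f v) with hg
  -- two untouched vertices in the same fiber are G-twins
  have htwins : ∀ u ∈ Tc, ∀ v ∈ Tc, g u = g v →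
      G.neighborSet u = G.neighborSet v := by
    have key : ∀ u v : V, H.connectedComponentMk u = H.connectedComponentMk v →
        f u = f v → H.neighborSet u ⊆ H.neighborSet v := by
      intro u v hcc hfc w hw
      have hadj : H.Adj u w := hw
      have hru : H.Reachable u w := hadj.reachable
      have hrv : H.Reachable v w :=
        (SimpleGraph.ConnectedComponent.exact hcc).symm.trans hru
      have hfw : f u ≠ f w := (hf u w hadj.ne hru).mp hadj
      have hvw : v ≠ w := fun h => hfw (hfc.symm ▸ h ▸ rfl)
      exact (hf v w hvw hrv).mpr (hfc ▸ hfw)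
    intro u hu v hv hguv
    simp only [hTc, Finset.mem_filter] at hu hv
    have h1 := congrArg Prod.fst hguv
    have h2 := congrArg Prod.snd hguv
    simp only [hg] at h1 h2
    rw [← hsameNb u hu.2, ← hsameNb v hv.2]
    exact le_antisymm (key u v h1 h2) (key v u h1.symm h2.symm)
  -- fibers over untouched vertices are small
  have hfiber : ∀ b : H.ConnectedComponent × Fin t,
      (Tc.filter (fun v => g v = b)).card ≤ 2 * k + 1 := by
    intro b
    rcases (Tc.filter (fun v => g v = b)).eq_empty_or_nonempty with he | ⟨v, hv⟩
    · simp [he]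
    · simp only [Finset.mem_filter] at hv
      obtain ⟨hvTc, hvb⟩ := hv
      rcases (G.neighborSet v).eq_empty_or_nonempty with hemp | hne
      · -- v is isolated in G, hence in H; its component is a singleton
        have hviso : H.neighborSet v = ∅ := by
          rw [hsameNb v (by simpa [hTc] using hvTc)]; exact hemp
        have : Tc.filter (fun u => g u = b) ⊆ {v} := by
          intro u hu
          simp only [Finset.mem_filter] at hu
          have hcc : H.connectedComponentMk u = H.connectedComponentMk v := by
            have := hu.2.trans hvb.symm
            exact congrArg Prod.fst this
          have hr : H.Reachable u v := SimpleGraph.ConnectedComponent.exact hcc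
          obtain ⟨p⟩ := hr.symm
          cases p with
          | nil => simp
          | cons h _ =>
            exfalso
            have : _ ∈ H.neighborSet v := h
            rw [hviso] at this
            exact this
        calc (Tc.filter (fun u => g u = b)).card ≤ ({v} : Finset V).card :=
              Finset.card_le_card this
          _ ≤ 2 * k + 1 := by simp
      · have hsub : ↑(Tc.filter (fun u => g u = b)) ⊆
            {u : V | G.neighborSet u = G.neighborSet v} := by
          intro u hu
          simp only [Finset.coe_filter, Set.mem_setOf_eq] at hu
          exact htwins u hu.1 v hvTc (hu.2.trans hvb.symm)
        calc (Tc.filter (fun u => g u = b)).card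
            = (↑(Tc.filter (fun u => g u = b)) : Set V).ncard := by
              rw [Set.ncard_coe_finset]
          _ ≤ {u : V | G.neighborSet u = G.neighborSet v}.ncard :=
              Set.ncard_le_ncard hsub (Set.toFinite _)
          _ ≤ 2 * k + 1 := htwin v hne
  -- count
  have hTcCard : Tc.card ≤ (2 * k + 1) * (p * t) := by
    have h1 := Finset.card_le_mul_card_image_of_maps_to
      (f := g) (s := Tc) (t := Finset.univ) (fun a _ => Finset.mem_univ _)
      (2 * k + 1) (fun b _ => hfiber b)
    have h2 : (Finset.univ : Finset (H.ConnectedComponent × Fin t)).card = p * t := by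
      rw [Finset.card_univ, Fintype.card_prod, Fintype.card_fin,
        ← Nat.card_eq_fintype_card, hp]
    rw [h2] at h1
    exact h1
  have hcover : (Finset.univ : Finset V) ⊆ Tc ∪ Tfin := by
    intro v _
    by_cases h : ∀ e ∈ F, v ∉ e
    · exact Finset.mem_union_left _ (Finset.mem_filter.mpr ⟨Finset.mem_univ _, h⟩)
    · push_neg at h
      obtain ⟨e, he, hve⟩ := h
      refine Finset.mem_union_right _ ?_
      simp only [hT, Finset.mem_biUnion]
      exact ⟨e, hFfin.mem_toFinset.mpr he, by simp [hve]⟩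
  calc Fintype.card V = (Finset.univ : Finset V).card := rfl
    _ ≤ (Tc ∪ Tfin).card := Finset.card_le_card hcover
    _ ≤ Tc.card + Tfin.card := Finset.card_union_le _ _
    _ ≤ (2 * k + 1) * (p * t) + 2 * k := by omega
    _ = p * t * (2 * k + 1) + 2 * k := by ring
end
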